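/- arXiv:0706.4450 — 9 statements merged into one kernel-verified Lean document; each statement's English description precedes it below -/
import Mathlib

section
/- Let H be a separable Hilbert space and X ∈ L²(Ω;H). The distortion function D_N(x₁,…,x_N) = E( min_{1≤i≤N} |X − x_i|²_H ) is lower semicontinuous on H^N for the product weak topology. -/
open MeasureTheory Filter Topology

/-! Let `P n` be the orthogonal projections onto an increasing sequence of finite-dimensional
subspaces with dense union. On a finite-dimensional space the weak and norm topologies agree, and
the distortion is norm continuous by dominated convergence, so each
`x ↦ E min_i ‖P n X - P n x_i‖²` is weakly continuous. Since `‖P n u‖` increases to `‖u‖`, these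
functions increase pointwise to `D_N` by monotone convergence, so `D_N` is a supremum of weakly
continuous functions. -/

theorem Filter.Tendsto.ciInf_of_finite {ι β L : Type*} [Finite ι] [Nonempty ι]
    [ConditionallyCompleteLinearOrder L] [TopologicalSpace L] [OrderTopology L]
    {l : Filter β} {f : ι → β → L} {g : ι → L} (h : ∀ i, Tendsto (f i) l (𝓝 (g i))) :
    Tendsto (fun b => ⨅ i, f i b) l (𝓝 (⨅ i, g i)) := by
  have := Fintype.ofFinite ι
  simp_rw [← Finset.inf'_univ_eq_ciInf]
  exact Tendsto.finset_inf'_nhds_apply _ fun i _ => h i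

theorem lowerSemicontinuous_integral_of_monotone {α Ω : Type*} [TopologicalSpace α]
    {mΩ : MeasurableSpace Ω} {μ : Measure Ω} {F : ℕ → α → Ω → ℝ} {f : α → Ω → ℝ}
    (hF : ∀ n x, Integrable (F n x) μ) (hf : ∀ x, Integrable (f x) μ)
    (h_mono : ∀ x, ∀ᵐ ω ∂μ, Monotone fun n => F n x ω)
    (h_tendsto : ∀ x, ∀ᵐ ω ∂μ, Tendsto (fun n => F n x ω) atTop (𝓝 (f x ω)))
    (h_lsc : ∀ n, LowerSemicontinuous fun x => ∫ ω, F n x ω ∂μ) :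
    LowerSemicontinuous fun x => ∫ ω, f x ω ∂μ := by
  have hlub : ∀ x, IsLUB (Set.range fun n => ∫ ω, F n x ω ∂μ) (∫ ω, f x ω ∂μ) := fun x =>
    isLUB_of_tendsto_atTop
      (fun n m hnm => integral_mono_ae (hF n x) (hF m x) <| by
        filter_upwards [h_mono x] with ω hω using hω hnm)
      (integral_tendsto_of_tendsto_of_monotone (hF · x) (hf x) (h_mono x) (h_tendsto x))
  simp_rw [← fun x => (hlub x).ciSup_eq]
  exact lowerSemicontinuous_ciSup (fun x => (hlub x).bddAbove) h_lsc

section Distortion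

variable {Ω E ι : Type*} {mΩ : MeasurableSpace Ω} {μ : Measure Ω} [NormedAddCommGroup E]
  {Z : Ω → E}

theorem aestronglyMeasurable_iInf_norm_sub_sq [Countable ι] (hZ : AEStronglyMeasurable Z μ)
    (y : ι → E) : AEStronglyMeasurable (fun ω => ⨅ i, ‖Z ω - y i‖ ^ 2) μ :=
  (AEMeasurable.iInf fun _ =>
    ((hZ.sub aestronglyMeasurable_const).norm.pow 2).aemeasurable).aestronglyMeasurable

theorem integrable_iInf_norm_sub_sq [IsFiniteMeasure μ] [Finite ι] [Nonempty ι]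
    (hZ : MemLp Z 2 μ) (y : ι → E) : Integrable (fun ω => ⨅ i, ‖Z ω - y i‖ ^ 2) μ := by
  obtain ⟨i⟩ := ‹Nonempty ι›
  have hi : Integrable (fun ω => ‖Z ω - y i‖ ^ 2) μ :=
    (memLp_two_iff_integrable_sq_norm (hZ.1.sub aestronglyMeasurable_const)).1
      (hZ.sub (memLp_const _))
  refine hi.mono' (aestronglyMeasurable_iInf_norm_sub_sq hZ.1 y) (ae_of_all _ fun ω => ?_)
  rw [Real.norm_of_nonneg (Real.iInf_nonneg fun _ => by positivity)]
  exact ciInf_le (Finite.bddBelow_range _) i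

theorem continuous_integral_iInf_norm_sub_sq [IsFiniteMeasure μ] [Fintype ι] [Nonempty ι]
    (hZ : MemLp Z 2 μ) : Continuous fun y : ι → E => ∫ ω, ⨅ i, ‖Z ω - y i‖ ^ 2 ∂μ := by
  refine continuous_iff_continuousAt.2 fun y₀ => continuousAt_of_dominated
    (bound := fun ω => 2 * (‖Z ω‖ ^ 2 + (‖y₀‖ + 1) ^ 2))
    (Eventually.of_forall fun y => aestronglyMeasurable_iInf_norm_sub_sq hZ.1 y) ?_
    ((((memLp_two_iff_integrable_sq_norm hZ.1).1 hZ).add (integrable_const _)).const_mul 2)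
    (ae_of_all _ fun ω => Tendsto.ciInf_of_finite fun i =>
      ((continuous_const.sub (continuous_apply i)).norm.pow 2).continuousAt)
  filter_upwards [Metric.ball_mem_nhds y₀ one_pos] with y hy
  refine ae_of_all _ fun ω => ?_
  obtain ⟨i⟩ := ‹Nonempty ι›
  have hyi : ‖y i‖ ≤ ‖y₀‖ + 1 :=
    calc ‖y i‖ ≤ ‖y‖ := norm_le_pi_norm y i
      _ ≤ ‖y₀‖ + ‖y - y₀‖ := norm_le_norm_add_norm_sub' y y₀
      _ ≤ ‖y₀‖ + 1 := by gcongr; exact (mem_ball_iff_norm.1 hy).le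
  rw [Real.norm_of_nonneg (Real.iInf_nonneg fun _ => by positivity)]
  calc ⨅ i, ‖Z ω - y i‖ ^ 2 ≤ ‖Z ω - y i‖ ^ 2 := ciInf_le (Finite.bddBelow_range _) i
    _ ≤ (‖Z ω‖ + (‖y₀‖ + 1)) ^ 2 := by
      gcongr
      exact (norm_sub_le _ _).trans (by gcongr)
    _ ≤ 2 * (‖Z ω‖ ^ 2 + (‖y₀‖ + 1) ^ 2) := add_sq_le

end Distortion

theorem continuous_toWeakSpace_symm_of_finiteDimensional {𝕜 F : Type*} [NontriviallyNormedField 𝕜]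
    [CompleteSpace 𝕜] [NormedAddCommGroup F] [NormedSpace 𝕜 F] [FiniteDimensional 𝕜 F] :
    Continuous (toWeakSpace 𝕜 F).symm := by
  let b := Module.finBasis 𝕜 F
  have hcoord : Continuous fun x : WeakSpace 𝕜 F => b.equivFunL ((toWeakSpace 𝕜 F).symm x) :=
    continuous_pi fun j => (WeakBilin.eval_continuous (topDualPairing 𝕜 F).flip
      (ContinuousLinearMap.proj j ∘L (b.equivFunL : F →L[𝕜] Fin _ → 𝕜))).congr fun _ => rfl
  exact (b.equivFunL.symm.continuous.comp hcoord).congr fun x => b.equivFunL.symm_apply_apply _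

section Projection

variable {𝕜 E : Type*} [RCLike 𝕜] [NormedAddCommGroup E] [InnerProductSpace 𝕜 E]

theorem Submodule.continuous_starProjection_toWeakSpace_symm (K : Submodule 𝕜 E)
    [FiniteDimensional 𝕜 K] :
    Continuous fun u : WeakSpace 𝕜 E => K.starProjection ((toWeakSpace 𝕜 E).symm u) :=
  K.subtypeL.continuous.comp <| continuous_toWeakSpace_symm_of_finiteDimensional.comp
    (WeakSpace.map K.orthogonalProjectionOnto).continuous

theorem Submodule.norm_starProjection_le_of_le {U V : Submodule 𝕜 E} [U.HasOrthogonalProjection]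
    [V.HasOrthogonalProjection] (h : U ≤ V) (x : E) :
    ‖U.starProjection x‖ ≤ ‖V.starProjection x‖ :=
  calc ‖U.starProjection x‖ = ‖U.starProjection (V.starProjection x)‖ := by
        rw [← ContinuousLinearMap.comp_apply, starProjection_comp_starProjection_of_le h]
    _ ≤ ‖V.starProjection x‖ := U.norm_starProjection_apply_le _

end Projection

theorem exists_monotone_finiteDimensional_dense_iSup (𝕜 E : Type*) [NontriviallyNormedField 𝕜]
    [NormedAddCommGroup E] [NormedSpace 𝕜 E] [TopologicalSpace.SeparableSpace E] :
    ∃ U : ℕ → Submodule 𝕜 E, Monotone U ∧ (∀ n, FiniteDimensional 𝕜 (U n)) ∧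
      ⊤ ≤ (⨆ n, U n).topologicalClosure := by
  let v := TopologicalSpace.denseSeq E
  refine ⟨fun n => Submodule.span 𝕜 (v '' Set.Iic n),
    fun n m h => Submodule.span_mono (Set.image_mono (Set.Iic_subset_Iic.2 h)),
    fun n => FiniteDimensional.span_of_finite 𝕜 ((Set.finite_Iic n).image v), ?_⟩
  rintro x -
  rw [← SetLike.mem_coe, Submodule.topologicalClosure_coe]
  refine closure_mono ?_ (TopologicalSpace.denseRange_denseSeq E x)
  rintro _ ⟨n, rfl⟩
  exact Submodule.mem_iSup_of_mem n (Submodule.subset_span ⟨n, Set.mem_Iic.2 le_rfl, rfl⟩)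

theorem distortion_weakly_lsc_general
    {H Ω : Type*} [NormedAddCommGroup H] [InnerProductSpace ℝ H]
    [TopologicalSpace.SeparableSpace H]
    [MeasurableSpace H] [BorelSpace H]
    {mΩ : MeasurableSpace Ω} (μ : Measure Ω) [IsProbabilityMeasure μ]
    (X : Ω → H) (hXm : Measurable X)
    (hX2 : Integrable (fun ω => ‖X ω‖ ^ 2) μ)
    (N : ℕ) (hN : 0 < N) :
    LowerSemicontinuous
      (fun x : Fin N → WeakSpace ℝ H =>
        ∫ ω, ⨅ i : Fin N, ‖X ω - (toWeakSpace ℝ H).symm (x i)‖ ^ 2 ∂μ) := by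
  have : Nonempty (Fin N) := ⟨⟨0, hN⟩⟩
  obtain ⟨U, hU, hUfin, hUdense⟩ := exists_monotone_finiteDimensional_dense_iSup ℝ H
  have hX : MemLp X 2 μ := (memLp_two_iff_integrable_sq_norm hXm.aestronglyMeasurable).2 hX2
  let P n := (U n).starProjection
  have hPX n : MemLp (fun ω => P n (X ω)) 2 μ := (P n).comp_memLp' hX
  have hcont n : Continuous fun x : Fin N → WeakSpace ℝ H =>
      ∫ ω, ⨅ i, ‖P n (X ω) - P n ((toWeakSpace ℝ H).symm (x i))‖ ^ 2 ∂μ :=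
    (continuous_integral_iInf_norm_sub_sq (hPX n)).comp
      (continuous_pi fun i => (U n).continuous_starProjection_toWeakSpace_symm.comp
        (continuous_apply i))
  refine lowerSemicontinuous_integral_of_monotone
    (fun n x => integrable_iInf_norm_sub_sq (hPX n) _)
    (fun x => integrable_iInf_norm_sub_sq hX _)
    (fun x => ae_of_all _ fun ω n m hnm => ?_)
    (fun x => ae_of_all _ fun ω => ?_)
    (fun n => (hcont n).lowerSemicontinuous)
  · simp only [P, ← map_sub]
    exact ciInf_mono (Finite.bddBelow_range _) fun i => by
      gcongr; exact Submodule.norm_starProjection_le_of_le (hU hnm) _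
  · simp only [P, ← map_sub]
    exact Tendsto.ciInf_of_finite fun i =>
      ((Submodule.starProjection_tendsto_self U hU _ hUdense).norm.pow 2)

/-- the distortion `D_N(x₁,…,x_N) = E min_i ‖X - x_i‖²` is lower
semicontinuous on `H^N` for the product of the weak topologies. -/
theorem distortion_weakly_lsc
    {H Ω : Type*} [NormedAddCommGroup H] [InnerProductSpace ℝ H]
    [TopologicalSpace.SeparableSpace H] [CompleteSpace H]
    [MeasurableSpace H] [BorelSpace H]
    {mΩ : MeasurableSpace Ω} (μ : Measure Ω) [IsProbabilityMeasure μ]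
    (X : Ω → H) (hXm : Measurable X)
    (hX2 : Integrable (fun ω => ‖X ω‖ ^ 2) μ)
    (N : ℕ) (hN : 0 < N) :
    LowerSemicontinuous
      (fun x : Fin N → WeakSpace ℝ H =>
        ∫ ω, ⨅ i : Fin N, ‖X ω - (toWeakSpace ℝ H).symm (x i)‖ ^ 2 ∂μ) :=
  distortion_weakly_lsc_general (mΩ := mΩ) μ X hXm hX2 N hN
end

section
/- Let H be a separable Hilbert space and X ∈ L²(Ω;H). For every N ≥ 1, the distortion function D_N attains its minimum on H^N, i.e. there exists an optimal quantizer at level N. -/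
/-!
Take a minimizing sequence of `N`-tuples. Passing to a subsequence, every coordinate either
converges weakly or escapes to infinity in norm; in both cases some point `z` satisfies
`‖v - z‖² ≤ liminf ‖v - u k‖²` for every `v` (weak lower semicontinuity of the norm, resp. the
liminf is `∞`). Taking the minimum over the coordinates and applying Fatou's lemma shows that
the tuple of these points has distortion at most the infimum.
-/

open MeasureTheory Filter Topology ENNReal
open scoped InnerProductSpace

theorem iInf_liminf_le_liminf_iInf {ι β α : Type*} [Finite ι] [CompleteLinearOrder α]
    (f : ι → β → α) (l : Filter β) :
    ⨅ i, liminf (f i) l ≤ liminf (fun k => ⨅ i, f i k) l := by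
  have := Fintype.ofFinite ι
  refine (le_liminf_iff).2 fun b hb => ?_
  have hev : ∀ i, ∀ᶠ k in l, b < f i k := fun i =>
    eventually_lt_of_lt_liminf (hb.trans_le (iInf_le _ i))
  filter_upwards [eventually_all.2 hev] with k hk
  rw [← Finset.inf_univ_eq_iInf, Finset.lt_inf_iff (hb.trans_le le_top)]
  exact fun i _ => hk i

theorem exists_strictMono_forall_of_finite {ι : Type*} [Finite ι] (P : ι → (ℕ → ℕ) → Prop)
    (hP : ∀ i (φ ψ : ℕ → ℕ), StrictMono ψ → P i φ → P i (φ ∘ ψ))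
    (hex : ∀ i (φ : ℕ → ℕ), ∃ ψ, StrictMono ψ ∧ P i (φ ∘ ψ)) :
    ∃ φ, StrictMono φ ∧ ∀ i, P i φ := by
  classical
  have := Fintype.ofFinite ι
  suffices ∀ s : Finset ι, ∃ φ, StrictMono φ ∧ ∀ i ∈ s, P i φ by
    simpa using this Finset.univ
  intro s
  induction s using Finset.induction_on with
  | empty => exact ⟨id, strictMono_id, by simp⟩
  | insert j s _ ih =>
    obtain ⟨φ, hφ, hs⟩ := ih
    obtain ⟨ψ, hψ, hj⟩ := hex j φ
    refine ⟨φ ∘ ψ, hφ.comp hψ, fun i hi => ?_⟩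
    rcases Finset.mem_insert.1 hi with rfl | hi
    exacts [hj, hP i φ ψ hψ (hs i hi)]

section Hilbert

variable {H : Type*} [NormedAddCommGroup H] [InnerProductSpace ℝ H]

theorem exists_subseq_tendsto_inner_of_bounded [TopologicalSpace.SeparableSpace H]
    [CompleteSpace H] {u : ℕ → H} {M : ℝ} (hu : ∀ k, ‖u k‖ ≤ M) :
    ∃ φ : ℕ → ℕ, StrictMono φ ∧
      ∃ z, ∀ w, Tendsto (fun k => ⟪u (φ k), w⟫_ℝ) atTop (𝓝 ⟪z, w⟫_ℝ) := by
  let f : ℕ → WeakDual ℝ H := fun k =>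
    StrongDual.toWeakDual (InnerProductSpace.toDual ℝ H (u k))
  have hf : ∀ k, f k ∈ WeakDual.toStrongDual ⁻¹' Metric.closedBall 0 M := by
    simpa [f] using hu
  obtain ⟨a, -, φ, hφ, ha⟩ := WeakDual.isSeqCompact_closedBall ℝ H 0 M hf
  refine ⟨φ, hφ, (InnerProductSpace.toDual ℝ H).symm a.toStrongDual, fun w => ?_⟩
  rw [InnerProductSpace.toDual_symm_apply]
  exact tendsto_iff_forall_eval_tendsto_topDualPairing.1 ha w

theorem sq_enorm_sub_le_liminf_of_tendsto_inner {u : ℕ → H} {z : H}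
    (hu : ∀ w, Tendsto (fun k => ⟪u k, w⟫_ℝ) atTop (𝓝 ⟪z, w⟫_ℝ)) (v : H) :
    ‖v - z‖ₑ ^ 2 ≤ liminf (fun k => ‖v - u k‖ₑ ^ 2) atTop := by
  have hcross : Tendsto (fun k => ⟪v - z, z - u k⟫_ℝ) atTop (𝓝 0) := by
    simpa [inner_sub_right, real_inner_comm] using
      (tendsto_const_nhds (x := ⟪z, v - z⟫_ℝ)).sub (hu (v - z))
  have hlim :
      Tendsto (fun k => ‖v - z‖ ^ 2 + 2 * ⟪v - z, z - u k⟫_ℝ) atTop (𝓝 (‖v - z‖ ^ 2)) := by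
    simpa using tendsto_const_nhds.add (hcross.const_mul 2)
  -- `‖v - u k‖² = ‖v - z‖² + 2⟪v - z, z - u k⟫ + ‖z - u k‖²`, and the cross term vanishes
  calc ‖v - z‖ₑ ^ 2
      = liminf (fun k => ENNReal.ofReal (‖v - z‖ ^ 2 + 2 * ⟪v - z, z - u k⟫_ℝ)) atTop := by
        rw [(ENNReal.tendsto_ofReal hlim).liminf_eq, ENNReal.ofReal_pow (norm_nonneg _),
          ofReal_norm]
    _ ≤ liminf (fun k => ‖v - u k‖ₑ ^ 2) atTop := by
        refine liminf_le_liminf (Eventually.of_forall fun k => ?_)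
        rw [← ofReal_norm, ← ENNReal.ofReal_pow (norm_nonneg _),
          ← sub_add_sub_cancel v z (u k), norm_add_sq_real]
        exact ENNReal.ofReal_le_ofReal (le_add_of_nonneg_right (sq_nonneg _))

theorem exists_subseq_sq_enorm_sub_le_liminf [TopologicalSpace.SeparableSpace H]
    [CompleteSpace H] (u : ℕ → H) :
    ∃ φ : ℕ → ℕ, StrictMono φ ∧
      ∃ z, ∀ v, ‖v - z‖ₑ ^ 2 ≤ liminf (fun k => ‖v - u (φ k)‖ₑ ^ 2) atTop := by
  by_cases hesc : Tendsto (fun k => ‖u k‖) atTop atTop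
  · refine ⟨id, strictMono_id, 0, fun v => ?_⟩
    have hdist : Tendsto (fun k => ‖v - u k‖) atTop atTop :=
      tendsto_atTop_mono (fun k => by simpa [norm_sub_rev] using norm_sub_norm_le (u k) v)
        (tendsto_atTop_add_const_right _ (-‖v‖) hesc)
    have htop : Tendsto (fun k => ‖v - u k‖ₑ ^ 2) atTop (𝓝 ⊤) := by
      simpa [ofReal_norm] using
        ENNReal.Tendsto.pow (n := 2) (ENNReal.tendsto_ofReal_atTop.comp hdist)
    simp [htop.liminf_eq]
  · obtain ⟨M, hM⟩ : ∃ M, ∃ᶠ k in atTop, ‖u k‖ < M := by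
      simpa [tendsto_atTop, frequently_atTop] using hesc
    obtain ⟨ψ, hψ, hψM⟩ := extraction_of_frequently_atTop hM
    obtain ⟨φ, hφ, z, hz⟩ := exists_subseq_tendsto_inner_of_bounded fun k => (hψM k).le
    exact ⟨ψ ∘ φ, hψ.comp hφ, z, sq_enorm_sub_le_liminf_of_tendsto_inner hz⟩

end Hilbert

section Distortion

variable {Ω H ι : Type*} {mΩ : MeasurableSpace Ω} [NormedAddCommGroup H]

/-- The paper's `D_N(x)`, taken in `ℝ≥0∞` so that it needs no integrability assumption. -/
noncomputable def distortion (μ : Measure Ω) (X : Ω → H) (x : ι → H) : ℝ≥0∞ :=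
  ∫⁻ ω, ⨅ i, ‖X ω - x i‖ₑ ^ 2 ∂μ

variable {μ : Measure Ω} {X : Ω → H}

theorem aemeasurable_iInf_sq_enorm_sub [MeasurableSpace H] [BorelSpace H] [Countable ι]
    (hX : AEMeasurable X μ) (x : ι → H) :
    AEMeasurable (fun ω => ⨅ i, ‖X ω - x i‖ₑ ^ 2) μ :=
  AEMeasurable.iInf fun i => (hX.sub_const (x i)).enorm.pow_const 2

theorem distortion_le_liminf [MeasurableSpace H] [BorelSpace H] [Finite ι]
    (hX : AEMeasurable X μ) {y : ℕ → ι → H} {x : ι → H}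
    (hx : ∀ i v, ‖v - x i‖ₑ ^ 2 ≤ liminf (fun k => ‖v - y k i‖ₑ ^ 2) atTop) :
    distortion μ X x ≤ liminf (fun k => distortion μ X (y k)) atTop :=
  calc distortion μ X x
      ≤ ∫⁻ ω, liminf (fun k => ⨅ i, ‖X ω - y k i‖ₑ ^ 2) atTop ∂μ :=
        lintegral_mono fun ω => (iInf_mono fun i => hx i (X ω)).trans
          (iInf_liminf_le_liminf_iInf (fun i k => ‖X ω - y k i‖ₑ ^ 2) atTop)
    _ ≤ liminf (fun k => distortion μ X (y k)) atTop :=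
        lintegral_liminf_le' fun k => aemeasurable_iInf_sq_enorm_sub hX (y k)

theorem distortion_lt_top [IsFiniteMeasure μ] [Nonempty ι] (hX : MemLp X 2 μ) (x : ι → H) :
    distortion μ X x < ⊤ := by
  obtain ⟨i⟩ := ‹Nonempty ι›
  have hXi : MemLp (fun ω => X ω - x i) 2 μ := hX.sub (memLp_const (x i))
  have hint : Integrable (fun ω => ‖X ω - x i‖ ^ 2) μ :=
    (memLp_two_iff_integrable_sq_norm hXi.1).1 hXi
  calc distortion μ X x ≤ ∫⁻ ω, ‖X ω - x i‖ₑ ^ 2 ∂μ := lintegral_mono fun ω => iInf_le _ i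
    _ < ⊤ := by simpa [hasFiniteIntegral_iff_enorm, enorm_pow] using hint.hasFiniteIntegral

theorem integral_iInf_sq_norm_sub [MeasurableSpace H] [BorelSpace H] [Countable ι]
    (hX : AEMeasurable X μ) {x : ι → H} (hx : distortion μ X x ≠ ⊤) :
    ∫ ω, ⨅ i, ‖X ω - x i‖ ^ 2 ∂μ = (distortion μ X x).toReal := by
  have hmeas := aemeasurable_iInf_sq_enorm_sub hX x
  rw [distortion, ← integral_toReal hmeas (ae_lt_top' hmeas hx)]
  congr with ω
  rw [ENNReal.toReal_iInf fun i => by finiteness]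
  simp [toReal_pow]

theorem exists_forall_distortion_le [InnerProductSpace ℝ H] [TopologicalSpace.SeparableSpace H]
    [CompleteSpace H] [MeasurableSpace H] [BorelSpace H] [Finite ι] (hX : AEMeasurable X μ) :
    ∃ x : ι → H, ∀ y : ι → H, distortion μ X x ≤ distortion μ X y := by
  obtain ⟨d, -, hd, hd_mem⟩ := exists_seq_tendsto_sInf (Set.range_nonempty (distortion μ X))
    (OrderBot.bddBelow _)
  choose y hy using hd_mem
  obtain ⟨φ, hφ, hx⟩ := exists_strictMono_forall_of_finite
    (fun (i : ι) φ => ∃ z, ∀ v, ‖v - z‖ₑ ^ 2 ≤ liminf (fun k => ‖v - y (φ k) i‖ₑ ^ 2) atTop)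
    (fun i φ ψ hψ ⟨z, hz⟩ => ⟨z, fun v => (hz v).trans hψ.tendsto_atTop.liminf_le_liminf_comp⟩)
    (fun i φ => exists_subseq_sq_enorm_sub_le_liminf fun k => y (φ k) i)
  choose x hx using hx
  refine ⟨x, fun y' => ?_⟩
  calc distortion μ X x ≤ liminf (fun k => distortion μ X (y (φ k))) atTop :=
        distortion_le_liminf hX hx
    _ = sInf (Set.range (distortion μ X)) := by
        simp only [hy]
        exact (hd.comp hφ.tendsto_atTop).liminf_eq
    _ ≤ distortion μ X y' := sInf_le (Set.mem_range_self y')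

end Distortion

/-- existence of an optimal quantizer at each level `N ≥ 1`:
the distortion attains its infimum on `H^N`. -/
theorem exists_optimal_quantizer
    {H Ω : Type*} [NormedAddCommGroup H] [InnerProductSpace ℝ H]
    [TopologicalSpace.SeparableSpace H] [CompleteSpace H]
    [MeasurableSpace H] [BorelSpace H]
    {mΩ : MeasurableSpace Ω} (μ : Measure Ω) [IsProbabilityMeasure μ]
    (X : Ω → H) (hXm : Measurable X)
    (hX2 : Integrable (fun ω => ‖X ω‖ ^ 2) μ)
    (N : ℕ) (hN : 1 ≤ N) :
    ∃ x : Fin N → H, ∀ y : Fin N → H,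
      (∫ ω, ⨅ i : Fin N, ‖X ω - x i‖ ^ 2 ∂μ) ≤
        ∫ ω, ⨅ i : Fin N, ‖X ω - y i‖ ^ 2 ∂μ := by
  have : Nonempty (Fin N) := ⟨⟨0, hN⟩⟩
  have hX : MemLp X 2 μ := (memLp_two_iff_integrable_sq_norm hXm.aestronglyMeasurable).2 hX2
  obtain ⟨x, hx⟩ := exists_forall_distortion_le (ι := Fin N) hXm.aemeasurable
  refine ⟨x, fun y => ?_⟩
  rw [integral_iInf_sq_norm_sub hXm.aemeasurable (distortion_lt_top hX x).ne,
    integral_iInf_sq_norm_sub hXm.aemeasurable (distortion_lt_top hX y).ne]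
  exact ENNReal.toReal_mono (distortion_lt_top hX y).ne (hx y)
end

section
/- Let H be a separable Hilbert space, X ∈ L²(Ω;H), and let X̂ be an optimal Voronoi quantization of X at level N. Then X̂ is stationary: X̂ = E(X | σ(X̂)) almost surely. In particular E X̂ = E X. -/
/-!
Replacing a code point `a` by any `c` in the codebook increases the distortion by at most
`E[‖X - c‖²; X̂ = a] - E[‖X - a‖²; X̂ = a]` (send the cell `{X̂ = a}` to `c`). By optimality, `a`
therefore minimises the quadratic `c ↦ E[‖X - c‖²; X̂ = a]`, so it is the mean of `X` on its cell:
`∫_{X̂ = a} X = P(X̂ = a) • a`. As `σ(X̂)` is generated by the finitely many cells, this is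
exactly `X̂ = E[X | X̂]`, and taking expectations gives `E X̂ = E X`.
-/

open MeasureTheory Metric Set Function

theorem MeasureTheory.MemLp.integrable_norm_sub_sq {Ω H : Type*} {mΩ : MeasurableSpace Ω}
    [NormedAddCommGroup H] {μ : Measure Ω} {X Y : Ω → H} (hX : MemLp X 2 μ) (hY : MemLp Y 2 μ) :
    Integrable (fun ω => ‖X ω - Y ω‖ ^ 2) μ :=
  (memLp_two_iff_integrable_sq_norm (hX.sub hY).1).1 (hX.sub hY)

section Mean

variable {Ω H : Type*} {mΩ : MeasurableSpace Ω} [NormedAddCommGroup H] [InnerProductSpace ℝ H]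
  [CompleteSpace H] {ν : Measure Ω} [IsFiniteMeasure ν] {X : Ω → H}

theorem integral_norm_sub_add_sq (hX : MemLp X 2 ν) (a w : H) :
    ∫ ω, ‖X ω - (a + w)‖ ^ 2 ∂ν =
      ∫ ω, ‖X ω - a‖ ^ 2 ∂ν - 2 * inner ℝ w (∫ ω, X ω - a ∂ν) + ν.real univ * ‖w‖ ^ 2 := by
  have hXa : Integrable (fun ω => X ω - a) ν := (hX.sub (memLp_const a)).integrable one_le_two
  have hsq : Integrable (fun ω => ‖X ω - a‖ ^ 2) ν := hX.integrable_norm_sub_sq (memLp_const a)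
  have hlin : Integrable (fun ω => 2 * inner ℝ w (X ω - a)) ν := (hXa.const_inner w).const_mul 2
  have hdiff : Integrable (fun ω => ‖X ω - a‖ ^ 2 - 2 * inner ℝ w (X ω - a)) ν := hsq.sub hlin
  calc ∫ ω, ‖X ω - (a + w)‖ ^ 2 ∂ν
      = ∫ ω, ‖X ω - a‖ ^ 2 - 2 * inner ℝ w (X ω - a) + ‖w‖ ^ 2 ∂ν := by
        congr with ω
        rw [← sub_sub, norm_sub_sq_real, real_inner_comm]
    _ = _ := by
        rw [integral_add hdiff (integrable_const _), integral_sub hsq hlin,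
          integral_const_mul, integral_inner hXa, integral_const, smul_eq_mul]

theorem integral_eq_smul_of_isMinOn (hX : MemLp X 2 ν) {a : H}
    (ha : IsMinOn (fun c => ∫ ω, ‖X ω - c‖ ^ 2 ∂ν) univ a) :
    ∫ ω, X ω ∂ν = ν.real univ • a := by
  set v := ∫ ω, X ω - a ∂ν with hv
  set m := ν.real univ
  have ht : 0 < (m + 1)⁻¹ := inv_pos.2 (by positivity)
  have hmt : m * (m + 1)⁻¹ < 1 := by
    rw [← div_eq_mul_inv, div_lt_one (by positivity)]; linarith
  -- move `a` by `t • v`, `t = (m + 1)⁻¹`: as `m t² < 2 t` the distortion drops unless `v = 0`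
  have hmin : ∫ ω, ‖X ω - a‖ ^ 2 ∂ν ≤
      ∫ ω, ‖X ω - a‖ ^ 2 ∂ν - 2 * inner ℝ ((m + 1)⁻¹ • v) v + m * ‖(m + 1)⁻¹ • v‖ ^ 2 :=
    integral_norm_sub_add_sq hX a _ ▸ ha (mem_univ (a + (m + 1)⁻¹ • v))
  rw [real_inner_smul_left, real_inner_self_eq_norm_sq, norm_smul, Real.norm_of_nonneg ht.le]
    at hmin
  have hcoef : 0 < (m + 1)⁻¹ * (2 - m * (m + 1)⁻¹) := mul_pos ht (by linarith)
  have hv0 : ‖v‖ ^ 2 = 0 := by nlinarith [sq_nonneg ‖v‖]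
  rwa [pow_eq_zero_iff two_ne_zero, norm_eq_zero, hv,
    integral_sub (hX.integrable one_le_two) (integrable_const a), integral_const,
    sub_eq_zero] at hv0

end Mean

theorem setIntegral_preimage_eq_of_forall_fiber {Ω H E : Type*} {mΩ : MeasurableSpace Ω}
    [MeasurableSpace H] [MeasurableSingletonClass H] [NormedAddCommGroup E] [NormedSpace ℝ E]
    {μ : Measure Ω} {Y : Ω → H} {Γ : Finset H} {f g : Ω → E}
    (hY : Measurable Y) (hYΓ : ∀ ω, Y ω ∈ Γ) (hf : Integrable f μ) (hg : Integrable g μ)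
    (hfg : ∀ a ∈ Γ, ∫ ω in Y ⁻¹' {a}, f ω ∂μ = ∫ ω in Y ⁻¹' {a}, g ω ∂μ) (S : Set H) :
    ∫ ω in Y ⁻¹' S, f ω ∂μ = ∫ ω in Y ⁻¹' S, g ω ∂μ := by
  classical
  have hS : Y ⁻¹' S = ⋃ a ∈ Γ.filter (· ∈ S), Y ⁻¹' {a} := by
    ext ω
    simp [hYΓ ω]
  have hfib : ∀ a ∈ Γ.filter (· ∈ S), MeasurableSet (Y ⁻¹' {a}) :=
    fun a _ => hY (measurableSet_singleton a)
  have hdisj : Set.Pairwise ↑(Γ.filter (· ∈ S)) (Disjoint on fun a => Y ⁻¹' {a}) :=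
    fun a _ b _ hab => (disjoint_singleton.2 hab).preimage Y
  rw [hS, integral_biUnion_finset _ hfib hdisj fun a _ => hf.integrableOn,
    integral_biUnion_finset _ hfib hdisj fun a _ => hg.integrableOn]
  exact Finset.sum_congr rfl fun a ha => hfg a (Finset.mem_filter.1 ha).1

section FiniteValued

variable {Ω H : Type*} {mΩ : MeasurableSpace Ω} [NormedAddCommGroup H] [MeasurableSpace H]
  {Y : Ω → H} {Γ : Finset H}

theorem Measurable.stronglyMeasurable_of_forall_mem_finset [BorelSpace H] (hY : Measurable Y)
    (hYΓ : ∀ ω, Y ω ∈ Γ) : StronglyMeasurable Y :=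
  stronglyMeasurable_iff_measurable_separable.2
    ⟨hY, Γ.finite_toSet.isSeparable.mono (range_subset_iff.2 hYΓ)⟩

theorem memLp_of_forall_mem_finset [BorelSpace H] {μ : Measure Ω} [IsFiniteMeasure μ]
    (hY : Measurable Y) (hYΓ : ∀ ω, Y ω ∈ Γ) (q : ENNReal) : MemLp Y q μ := by
  obtain ⟨C, hC⟩ := isBounded_iff_forall_norm_le.1 Γ.finite_toSet.isBounded
  exact MemLp.of_bound (hY.stronglyMeasurable_of_forall_mem_finset hYΓ).aestronglyMeasurable C
    (ae_of_all _ fun ω => hC _ (hYΓ ω))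

theorem condExp_comap_ae_eq_of_setIntegral_fiber [BorelSpace H] [NormedSpace ℝ H]
    [CompleteSpace H] {μ : Measure Ω} [IsFiniteMeasure μ] {X : Ω → H}
    (hY : Measurable Y) (hYΓ : ∀ ω, Y ω ∈ Γ) (hX : Integrable X μ)
    (hfiber : ∀ a ∈ Γ, ∫ ω in Y ⁻¹' {a}, X ω ∂μ = μ.real (Y ⁻¹' {a}) • a) :
    μ[X | MeasurableSpace.comap Y inferInstance] =ᵐ[μ] Y := by
  have hYint : Integrable Y μ := (memLp_of_forall_mem_finset hY hYΓ 1).integrable le_rfl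
  have hYfib : ∀ a ∈ Γ, ∫ ω in Y ⁻¹' {a}, Y ω ∂μ = ∫ ω in Y ⁻¹' {a}, X ω ∂μ := fun a ha => by
    rw [hfiber a ha, setIntegral_congr_fun (hY (measurableSet_singleton a)) fun ω hω => hω,
      setIntegral_const]
  refine (ae_eq_condExp_of_forall_setIntegral_eq hY.comap_le hX
    (fun _ _ _ => hYint.integrableOn) ?_ ?_).symm
  · rintro _ ⟨S, -, rfl⟩ -
    exact setIntegral_preimage_eq_of_forall_fiber hY hYΓ hYint hX hYfib S
  · exact (Measurable.of_comap_le le_rfl).stronglyMeasurable_of_forall_mem_finset hYΓ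
      |>.aestronglyMeasurable

end FiniteValued

theorem isMinOn_setIntegral_norm_sub_sq_fiber {Ω H : Type*} {mΩ : MeasurableSpace Ω}
    [NormedAddCommGroup H] [MeasurableSpace H] [BorelSpace H] {μ : Measure Ω} [IsFiniteMeasure μ]
    {X Y : Ω → H} {Γ : Finset H} (hX : MemLp X 2 μ) (hY : Measurable Y) (hYΓ : ∀ ω, Y ω ∈ Γ)
    (hXY : ∀ ω, ‖X ω - Y ω‖ = infDist (X ω) Γ)
    (hopt : ∀ Γ' : Finset H, Γ'.Nonempty → Γ'.card ≤ Γ.card →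
      ∫ ω, infDist (X ω) Γ ^ 2 ∂μ ≤ ∫ ω, infDist (X ω) Γ' ^ 2 ∂μ)
    {a : H} (ha : a ∈ Γ) :
    IsMinOn (fun c => ∫ ω in Y ⁻¹' {a}, ‖X ω - c‖ ^ 2 ∂μ) univ a := by
  classical
  intro c _
  set s := Y ⁻¹' {a}
  have hs : MeasurableSet s := hY (measurableSet_singleton a)
  have hXY_int : Integrable (fun ω => ‖X ω - Y ω‖ ^ 2) μ :=
    hX.integrable_norm_sub_sq (memLp_of_forall_mem_finset hY hYΓ 2)
  have hXc_int : Integrable (fun ω => ‖X ω - c‖ ^ 2) μ := hX.integrable_norm_sub_sq (memLp_const c)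
  have hΓ : ∫ ω, infDist (X ω) Γ ^ 2 ∂μ =
      ∫ ω in s, ‖X ω - a‖ ^ 2 ∂μ + ∫ ω in sᶜ, ‖X ω - Y ω‖ ^ 2 ∂μ := by
    simp_rw [← hXY]
    rw [← integral_add_compl hs hXY_int]
    congr 1
    exact setIntegral_congr_fun hs fun ω (hω : Y ω = a) => by rw [hω]
  -- replace `a` by `c` in the codebook and send the cell of `a` to `c`
  have hΓ' : ∫ ω, infDist (X ω) ↑(insert c (Γ.erase a)) ^ 2 ∂μ ≤
      ∫ ω in s, ‖X ω - c‖ ^ 2 ∂μ + ∫ ω in sᶜ, ‖X ω - Y ω‖ ^ 2 ∂μ := by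
    rw [← integral_piecewise hs hXc_int.integrableOn hXY_int.integrableOn]
    refine integral_mono_of_nonneg (ae_of_all _ fun ω => by positivity)
      (Integrable.piecewise hs hXc_int.integrableOn hXY_int.integrableOn) (ae_of_all _ fun ω => ?_)
    dsimp only
    by_cases hω : ω ∈ s
    · rw [piecewise_eq_of_mem _ _ _ hω, ← dist_eq_norm]
      exact pow_le_pow_left₀ infDist_nonneg (infDist_le_dist_of_mem (by simp)) 2
    · rw [piecewise_eq_of_notMem _ _ _ hω, ← dist_eq_norm]
      exact pow_le_pow_left₀ infDist_nonneg
        (infDist_le_dist_of_mem (by simp [hYΓ ω, show Y ω ≠ a from hω])) 2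
  have hcard : (insert c (Γ.erase a)).card ≤ Γ.card :=
    (Finset.card_insert_le _ _).trans (Finset.card_erase_add_one ha).le
  have hoptc := hopt _ (Finset.insert_nonempty _ _) hcard
  show ∫ ω in s, ‖X ω - a‖ ^ 2 ∂μ ≤ ∫ ω in s, ‖X ω - c‖ ^ 2 ∂μ
  linarith

theorem optimal_quantizer_stationary_general
    {H Ω : Type*} [NormedAddCommGroup H] [InnerProductSpace ℝ H]
    [TopologicalSpace.SeparableSpace H] [CompleteSpace H]
    [MeasurableSpace H] [BorelSpace H]
    {mΩ : MeasurableSpace Ω} (μ : Measure Ω) [IsProbabilityMeasure μ]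
    (X : Ω → H) (hXm : Measurable X)
    (hX2 : Integrable (fun ω => ‖X ω‖ ^ 2) μ)
    (N : ℕ) (Γ : Finset H) (hΓcard : Γ.card ≤ N)
    (hopt : ∀ Γ' : Finset H, Γ'.Nonempty → Γ'.card ≤ N →
      (∫ ω, Metric.infDist (X ω) (Γ : Set H) ^ 2 ∂μ) ≤
        ∫ ω, Metric.infDist (X ω) (Γ' : Set H) ^ 2 ∂μ)
    (p : H → H) (hpm : Measurable p)
    (hp : ∀ ξ, p ξ ∈ Γ ∧ ‖ξ - p ξ‖ = Metric.infDist ξ (Γ : Set H)) :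
    μ[X | MeasurableSpace.comap (fun ω => p (X ω)) inferInstance]
        =ᵐ[μ] (fun ω => p (X ω)) ∧
      (∫ ω, p (X ω) ∂μ) = ∫ ω, X ω ∂μ := by
  have : SecondCountableTopology H := UniformSpace.secondCountable_of_separable H
  have hX : MemLp X 2 μ := (memLp_two_iff_integrable_sq_norm hXm.aestronglyMeasurable).2 hX2
  have hY : Measurable fun ω => p (X ω) := hpm.comp hXm
  have hcentroid : ∀ a ∈ Γ, ∫ ω in (fun ω => p (X ω)) ⁻¹' {a}, X ω ∂μ =
      μ.real ((fun ω => p (X ω)) ⁻¹' {a}) • a := fun a ha => by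
    rw [integral_eq_smul_of_isMinOn (hX.restrict _) (isMinOn_setIntegral_norm_sub_sq_fiber hX hY
      (fun ω => (hp (X ω)).1) (fun ω => (hp (X ω)).2)
      (fun Γ' hne hcard => hopt Γ' hne (hcard.trans hΓcard)) ha), measureReal_restrict_apply_univ]
  have hstat := condExp_comap_ae_eq_of_setIntegral_fiber hY (fun ω => (hp (X ω)).1)
    (hX.integrable one_le_two) hcentroid
  exact ⟨hstat, (integral_congr_ae hstat).symm.trans (integral_condExp hY.comap_le)⟩

/-- an optimal Voronoi quantization `X̂` is stationary:
`X̂ = E(X | σ(X̂))` a.s.; in particular `E X̂ = E X`. -/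
theorem optimal_quantizer_stationary
    {H Ω : Type*} [NormedAddCommGroup H] [InnerProductSpace ℝ H]
    [TopologicalSpace.SeparableSpace H] [CompleteSpace H]
    [MeasurableSpace H] [BorelSpace H]
    {mΩ : MeasurableSpace Ω} (μ : Measure Ω) [IsProbabilityMeasure μ]
    (X : Ω → H) (hXm : Measurable X)
    (hX2 : Integrable (fun ω => ‖X ω‖ ^ 2) μ)
    (N : ℕ) (Γ : Finset H) (hΓne : Γ.Nonempty) (hΓcard : Γ.card ≤ N)
    (hopt : ∀ Γ' : Finset H, Γ'.Nonempty → Γ'.card ≤ N →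
      (∫ ω, Metric.infDist (X ω) (Γ : Set H) ^ 2 ∂μ) ≤
        ∫ ω, Metric.infDist (X ω) (Γ' : Set H) ^ 2 ∂μ)
    (p : H → H) (hpm : Measurable p)
    (hp : ∀ ξ, p ξ ∈ Γ ∧ ‖ξ - p ξ‖ = Metric.infDist ξ (Γ : Set H)) :
    μ[X | MeasurableSpace.comap (fun ω => p (X ω)) inferInstance]
        =ᵐ[μ] (fun ω => p (X ω)) ∧
      (∫ ω, p (X ω) ∂μ) = ∫ ω, X ω ∂μ :=
  optimal_quantizer_stationary_general (mΩ := mΩ) μ X hXm hX2 N Γ hΓcard hopt p hpm hp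
end

section
/- Let H be a separable Hilbert space, X ∈ L²(Ω;H), and Γ a finite quantizer with Voronoi quantization X̂ = X̂^Γ. Then ‖X − X̂‖₁ = sup{ |E F(X) − E F(X̂)| : F : H → ℝ with Lipschitz constant ≤ 1 }. -/
/-!
Since `X̂ = p(X)` is a nearest point of `Γ`, the pointwise error `‖X - X̂‖` is the `1`-Lipschitz
function `d(·, Γ)` evaluated at `X`, and it vanishes at `X̂`; so `F = d(·, Γ)` realises the
`L¹` error. Conversely, for any `1`-Lipschitz `F` the integrand of `E F(X) - E F(X̂)` is pointwise
bounded by `‖X - X̂‖`.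
-/

open MeasureTheory

section LipschitzIntegral

variable {α Ω : Type*} [PseudoMetricSpace α] {mΩ : MeasurableSpace Ω} {μ : Measure Ω}
  {F : α → ℝ} {K : NNReal} {Y Z : Ω → α}

lemma LipschitzWith.integrable_comp_of_integrable_dist [MeasurableSpace α]
    [OpensMeasurableSpace α] (hF : LipschitzWith K F) (hY : AEMeasurable Y μ)
    (hFZ : Integrable (fun ω => F (Z ω)) μ) (hd : Integrable (fun ω => dist (Y ω) (Z ω)) μ) :
    Integrable (fun ω => F (Y ω)) μ := by
  refine (hFZ.norm.add (hd.const_mul K)).mono'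
    (hF.continuous.measurable.comp_aemeasurable hY).aestronglyMeasurable ?_
  filter_upwards with ω
  have hlip : |F (Y ω) - F (Z ω)| ≤ K * dist (Y ω) (Z ω) := by
    simpa only [Real.dist_eq] using hF.dist_le_mul (Y ω) (Z ω)
  simp only [Real.norm_eq_abs, Pi.add_apply]
  linarith [abs_sub_abs_le_abs_sub (F (Y ω)) (F (Z ω))]

lemma LipschitzWith.abs_integral_sub_le (hF : LipschitzWith K F)
    (hFY : Integrable (fun ω => F (Y ω)) μ) (hFZ : Integrable (fun ω => F (Z ω)) μ)
    (hd : Integrable (fun ω => dist (Y ω) (Z ω)) μ) :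
    |(∫ ω, F (Y ω) ∂μ) - ∫ ω, F (Z ω) ∂μ| ≤ K * ∫ ω, dist (Y ω) (Z ω) ∂μ := by
  rw [← integral_sub hFY hFZ, ← integral_const_mul]
  calc |∫ ω, (F (Y ω) - F (Z ω)) ∂μ| ≤ ∫ ω, |F (Y ω) - F (Z ω)| ∂μ :=
        abs_integral_le_integral_abs
    _ ≤ ∫ ω, K * dist (Y ω) (Z ω) ∂μ :=
        integral_mono (hFY.sub hFZ).abs (hd.const_mul K) fun ω => by
          simpa only [Real.dist_eq] using hF.dist_le_mul (Y ω) (Z ω)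

end LipschitzIntegral

theorem L1_error_eq_sup_lipschitz_general
    {H Ω : Type*} [NormedAddCommGroup H]
    [MeasurableSpace H] [BorelSpace H]
    {mΩ : MeasurableSpace Ω} (μ : Measure Ω) [IsProbabilityMeasure μ]
    (X : Ω → H) (hXm : Measurable X)
    (hX2 : Integrable (fun ω => ‖X ω‖ ^ 2) μ)
    (Γ : Finset H)
    (p : H → H) (hpm : Measurable p)
    (hp : ∀ ξ, p ξ ∈ Γ ∧ ‖ξ - p ξ‖ = Metric.infDist ξ (Γ : Set H)) :
    IsGreatest {r : ℝ | ∃ F : H → ℝ, LipschitzWith 1 F ∧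
        r = |(∫ ω, F (X ω) ∂μ) - ∫ ω, F (p (X ω)) ∂μ|}
      (∫ ω, ‖X ω - p (X ω)‖ ∂μ) := by
  have hX1 : Integrable (fun ω => dist (X ω) 0) μ := by
    simpa only [dist_zero_right] using
      ((memLp_two_iff_integrable_sq hXm.norm.aestronglyMeasurable).2 hX2).integrable one_le_two
  have hFX {F : H → ℝ} (hF : LipschitzWith 1 F) : Integrable (fun ω => F (X ω)) μ :=
    hF.integrable_comp_of_integrable_dist hXm.aemeasurable (integrable_const (F 0)) hX1
  have herr : (fun ω => dist (X ω) (p (X ω))) = fun ω => Metric.infDist (X ω) (Γ : Set H) :=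
    funext fun ω => (dist_eq_norm _ _).trans (hp (X ω)).2
  have hd : Integrable (fun ω => dist (X ω) (p (X ω))) μ :=
    herr ▸ hFX (Metric.lipschitz_infDist_pt _)
  simp only [← dist_eq_norm]
  constructor
  · refine ⟨fun ξ => Metric.infDist ξ (Γ : Set H), Metric.lipschitz_infDist_pt _, ?_⟩
    simp only [Metric.infDist_zero_of_mem (hp _).1, integral_zero, sub_zero, herr]
    exact (abs_of_nonneg (integral_nonneg fun ω => Metric.infDist_nonneg)).symm
  · rintro r ⟨F, hF, rfl⟩
    have hFpX : Integrable (fun ω => F (p (X ω))) μ :=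
      hF.integrable_comp_of_integrable_dist (hpm.comp hXm).aemeasurable (hFX hF)
        (by simpa only [dist_comm] using hd)
    simpa only [NNReal.coe_one, one_mul] using hF.abs_integral_sub_le (hFX hF) hFpX hd

/-- `‖X − X̂‖₁` equals the supremum (attained, hence a greatest
element) over all `1`-Lipschitz `F : H → ℝ` of `|E F(X) − E F(X̂)|`. -/
theorem L1_error_eq_sup_lipschitz
    {H Ω : Type*} [NormedAddCommGroup H] [InnerProductSpace ℝ H]
    [TopologicalSpace.SeparableSpace H] [CompleteSpace H]
    [MeasurableSpace H] [BorelSpace H]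
    {mΩ : MeasurableSpace Ω} (μ : Measure Ω) [IsProbabilityMeasure μ]
    (X : Ω → H) (hXm : Measurable X)
    (hX2 : Integrable (fun ω => ‖X ω‖ ^ 2) μ)
    (Γ : Finset H) (hΓne : Γ.Nonempty)
    (p : H → H) (hpm : Measurable p)
    (hp : ∀ ξ, p ξ ∈ Γ ∧ ‖ξ - p ξ‖ = Metric.infDist ξ (Γ : Set H)) :
    IsGreatest {r : ℝ | ∃ F : H → ℝ, LipschitzWith 1 F ∧
        r = |(∫ ω, F (X ω) ∂μ) - ∫ ω, F (p (X ω)) ∂μ|}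
      (∫ ω, ‖X ω - p (X ω)‖ ∂μ) :=
  L1_error_eq_sup_lipschitz_general (mΩ := mΩ) μ X hXm hX2 Γ p hpm hp
end

section
/- Let H be a separable Hilbert space, X ∈ L²(Ω;H), and let Γ be a stationary quantizer of X, i.e. X̂ = E(X | X̂) where X̂ = X̂^Γ. Let F : H → ℝ be Fréchet differentiable with Lipschitz differential DF (with constant [DF]_Lip). Then |E F(X) − E F(X̂)| ≤ [DF]_Lip ‖X − X̂‖₂², i.e. the quantized cubature formula is of second order at stationary quantizers. -/
/-!
Expand `F` to first order around the quantized value: by the Taylor estimate,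
`F(X) = F(X̂) + DF(X̂).(X - X̂) + R` with `|R| ≤ [DF]_Lip ‖X - X̂‖²`. Since `DF(X̂)` is
`σ(X̂)`-measurable, pulling it out of the conditional expectation and using stationarity
`E(X - X̂ | X̂) = 0` makes the first-order term vanish in expectation, leaving only `E R`.
-/

open MeasureTheory
open scoped NNReal

section Taylor

variable {E G : Type*} [NormedAddCommGroup E] [NormedSpace ℝ E]
  [NormedAddCommGroup G] [NormedSpace ℝ G]
  {f : E → G} {f' : E → E →L[ℝ] G} {L : ℝ≥0}

theorem norm_image_sub_sub_fderiv_le_of_lipschitzWith (hf : ∀ x, HasFDerivAt f (f' x) x)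
    (hf' : LipschitzWith L f') (x y : E) :
    ‖f y - f x - f' x (y - x)‖ ≤ L * ‖y - x‖ ^ 2 := by
  have bound : ∀ z ∈ Metric.closedBall x ‖y - x‖, ‖f' z - f' x‖ ≤ L * ‖y - x‖ := by
    intro z hz
    rw [← dist_eq_norm]
    exact (hf'.dist_le_mul z x).trans (by gcongr; exact hz)
  calc ‖f y - f x - f' x (y - x)‖ ≤ L * ‖y - x‖ * ‖y - x‖ :=
        (convex_closedBall x _).norm_image_sub_le_of_norm_hasFDerivWithin_le'
          (fun z _ => (hf z).hasFDerivWithinAt) bound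
          (Metric.mem_closedBall_self (norm_nonneg _)) (by simp [dist_eq_norm])
    _ = L * ‖y - x‖ ^ 2 := by ring

theorem norm_image_le_of_lipschitzWith_fderiv (hf : ∀ x, HasFDerivAt f (f' x) x)
    (hf' : LipschitzWith L f') (x : E) :
    ‖f x‖ ≤ ‖f 0‖ + ‖f' 0‖ * ‖x‖ + L * ‖x‖ ^ 2 := by
  have taylor := norm_image_sub_sub_fderiv_le_of_lipschitzWith hf hf' 0 x
  rw [sub_zero] at taylor
  calc ‖f x‖ = ‖f 0 + f' 0 x + (f x - f 0 - f' 0 x)‖ := by congr 1; abel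
    _ ≤ ‖f 0‖ + ‖f' 0 x‖ + ‖f x - f 0 - f' 0 x‖ := norm_add₃_le
    _ ≤ ‖f 0‖ + ‖f' 0‖ * ‖x‖ + L * ‖x‖ ^ 2 := by gcongr; exact (f' 0).le_opNorm x

end Taylor

namespace MeasureTheory

variable {Ω E : Type*} {m mΩ : MeasurableSpace Ω} {μ : Measure Ω}
  [NormedAddCommGroup E] [NormedSpace ℝ E]

theorem MemLp.integrable_comp_of_lipschitzWith_fderiv [IsFiniteMeasure μ] {X : Ω → E}
    (hX : MemLp X 2 μ) {f : E → ℝ} {f' : E → E →L[ℝ] ℝ} {L : ℝ≥0}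
    (hf : ∀ x, HasFDerivAt f (f' x) x) (hf' : LipschitzWith L f') :
    Integrable (fun ω => f (X ω)) μ := by
  have hf_cont : Continuous f := continuous_iff_continuousAt.2 fun x => (hf x).continuousAt
  have hbound : Integrable (fun ω => ‖f 0‖ + ‖f' 0‖ * ‖X ω‖ + L * ‖X ω‖ ^ 2) μ :=
    ((integrable_const _).add ((hX.integrable one_le_two).norm.const_mul _)).add
      ((hX.integrable_norm_pow two_ne_zero).const_mul _)
  exact hbound.mono' (hf_cont.comp_aestronglyMeasurable hX.1)
    (ae_of_all _ fun ω => norm_image_le_of_lipschitzWith_fderiv hf hf' (X ω))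

theorem integral_apply_sub_eq_zero_of_condExp_eq [CompleteSpace E] {G : Type*}
    [NormedAddCommGroup G] [NormedSpace ℝ G] [CompleteSpace G] [IsFiniteMeasure μ]
    (hm : m ≤ mΩ) {X Y : Ω → E} {A : Ω → E →L[ℝ] G} (hA : StronglyMeasurable[m] A)
    (hAXY : Integrable (fun ω => A ω (X ω - Y ω)) μ) (hX : Integrable X μ)
    (hYm : StronglyMeasurable[m] Y) (hY : Integrable Y μ) (hXY : μ[X | m] =ᵐ[μ] Y) :
    ∫ ω, A ω (X ω - Y ω) ∂μ = 0 := by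
  have hcond : μ[X - Y | m] =ᵐ[μ] 0 := by
    filter_upwards [condExp_sub hX hY m, hXY] with ω hsub hω
    rw [hsub, Pi.sub_apply, hω, condExp_of_stronglyMeasurable hm hYm hY, sub_self, Pi.zero_apply]
  calc ∫ ω, A ω (X ω - Y ω) ∂μ = ∫ ω, (μ[fun ω => A ω (X ω - Y ω) | m]) ω ∂μ :=
        (integral_condExp hm).symm
    _ = ∫ ω, A ω ((μ[X - Y | m]) ω) ∂μ :=
        integral_congr_ae (condExp_bilin_of_stronglyMeasurable_left
          (ContinuousLinearMap.id ℝ (E →L[ℝ] G)) hA hAXY (hX.sub hY))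
    _ = 0 := by
        rw [integral_congr_ae (hcond.mono fun ω hω => by rw [hω, Pi.zero_apply, map_zero])]
        exact integral_zero Ω G

theorem abs_integral_comp_sub_integral_comp_le_of_condExp_eq [CompleteSpace E]
    [IsFiniteMeasure μ] (hm : m ≤ mΩ) {X Y : Ω → E} (hX : MemLp X 2 μ)
    (hYm : StronglyMeasurable[m] Y) (hY : MemLp Y 2 μ) (hXY : μ[X | m] =ᵐ[μ] Y)
    {f : E → ℝ} {f' : E → E →L[ℝ] ℝ} {L : ℝ≥0}
    (hf : ∀ x, HasFDerivAt f (f' x) x) (hf' : LipschitzWith L f') :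
    |(∫ ω, f (X ω) ∂μ) - ∫ ω, f (Y ω) ∂μ| ≤ L * ∫ ω, ‖X ω - Y ω‖ ^ 2 ∂μ := by
  set lin : Ω → ℝ := fun ω => f' (Y ω) (X ω - Y ω)
  set R : Ω → ℝ := fun ω => f (X ω) - f (Y ω) - lin ω
  have hfX := hX.integrable_comp_of_lipschitzWith_fderiv hf hf'
  have hfY := hY.integrable_comp_of_lipschitzWith_fderiv hf hf'
  have hA : StronglyMeasurable[m] fun ω => f' (Y ω) := hf'.continuous.comp_stronglyMeasurable hYm
  have hR_le : ∀ ω, ‖R ω‖ ≤ L * ‖X ω - Y ω‖ ^ 2 := fun ω =>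
    norm_image_sub_sub_fderiv_le_of_lipschitzWith hf hf' (Y ω) (X ω)
  have hR : Integrable R μ := by
    refine (((hX.sub hY).integrable_norm_pow two_ne_zero).const_mul _).mono' ?_ (ae_of_all _ hR_le)
    exact (hfX.sub hfY).1.sub <| (ContinuousLinearMap.id ℝ (E →L[ℝ] ℝ)).aestronglyMeasurable_comp₂
      (hA.mono hm).aestronglyMeasurable (hX.1.sub hY.1)
  have hlin : Integrable lin μ := by
    convert (hfX.sub hfY).sub hR using 1
    ext ω; simp only [R, Pi.sub_apply]; ring
  have hlin_zero : ∫ ω, lin ω ∂μ = 0 :=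
    integral_apply_sub_eq_zero_of_condExp_eq hm hA hlin (hX.integrable one_le_two) hYm
      (hY.integrable one_le_two) hXY
  have hdiff : ∫ ω, R ω ∂μ = (∫ ω, f (X ω) ∂μ) - ∫ ω, f (Y ω) ∂μ := by
    calc ∫ ω, R ω ∂μ = (∫ ω, f (X ω) - f (Y ω) ∂μ) - ∫ ω, lin ω ∂μ :=
          integral_sub (hfX.sub hfY) hlin
      _ = (∫ ω, f (X ω) ∂μ) - ∫ ω, f (Y ω) ∂μ := by
          rw [hlin_zero, sub_zero, integral_sub hfX hfY]
  calc |(∫ ω, f (X ω) ∂μ) - ∫ ω, f (Y ω) ∂μ| = ‖∫ ω, R ω ∂μ‖ := by rw [← hdiff, Real.norm_eq_abs]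
    _ ≤ ∫ ω, (L : ℝ) * ‖X ω - Y ω‖ ^ 2 ∂μ := norm_integral_le_of_norm_le
        (((hX.sub hY).integrable_norm_pow two_ne_zero).const_mul _) (ae_of_all _ hR_le)
    _ = L * ∫ ω, ‖X ω - Y ω‖ ^ 2 ∂μ := integral_const_mul _ _

end MeasureTheory

theorem stationary_second_order_cubature_general
    {H Ω : Type*} [NormedAddCommGroup H] [InnerProductSpace ℝ H]
    [TopologicalSpace.SeparableSpace H] [CompleteSpace H]
    [MeasurableSpace H] [BorelSpace H]
    {mΩ : MeasurableSpace Ω} (μ : Measure Ω) [IsProbabilityMeasure μ]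
    (X : Ω → H) (hXm : Measurable X)
    (hX2 : Integrable (fun ω => ‖X ω‖ ^ 2) μ)
    (Γ : Finset H)
    (p : H → H) (hpm : Measurable p)
    (hp : ∀ ξ, p ξ ∈ Γ ∧ ‖ξ - p ξ‖ = Metric.infDist ξ (Γ : Set H))
    -- stationarity of the quantizer
    (hstat : μ[X | MeasurableSpace.comap (fun ω => p (X ω)) inferInstance]
      =ᵐ[μ] (fun ω => p (X ω)))
    (F : H → ℝ) (F' : H → H →L[ℝ] ℝ) (L : NNReal)
    (hFdiff : ∀ x, HasFDerivAt F (F' x) x)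
    (hF' : LipschitzWith L F') :
    |(∫ ω, F (X ω) ∂μ) - ∫ ω, F (p (X ω)) ∂μ|
      ≤ (L : ℝ) * ∫ ω, ‖X ω - p (X ω)‖ ^ 2 ∂μ := by
  have hX : MemLp X 2 μ := (memLp_two_iff_integrable_sq_norm hXm.aestronglyMeasurable).2 hX2
  obtain ⟨C, hC⟩ := Γ.finite_toSet.isBounded.exists_norm_le
  have hXhat : MemLp (fun ω => p (X ω)) 2 μ :=
    MemLp.of_bound (hpm.comp hXm).aestronglyMeasurable C (ae_of_all _ fun ω => hC _ (hp _).1)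
  exact abs_integral_comp_sub_integral_comp_le_of_condExp_eq (hpm.comp hXm).comap_le hX
    (comap_measurable _).stronglyMeasurable hXhat hstat hFdiff hF'

/-- second-order cubature formula at a stationary quantizer:
if `X̂ = E(X|σ(X̂))` and `F` is `C¹` with Lipschitz differential `DF`
(constant `L`), then `|E F(X) − E F(X̂)| ≤ L ‖X − X̂‖₂²`. -/
theorem stationary_second_order_cubature
    {H Ω : Type*} [NormedAddCommGroup H] [InnerProductSpace ℝ H]
    [TopologicalSpace.SeparableSpace H] [CompleteSpace H]
    [MeasurableSpace H] [BorelSpace H]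
    {mΩ : MeasurableSpace Ω} (μ : Measure Ω) [IsProbabilityMeasure μ]
    (X : Ω → H) (hXm : Measurable X)
    (hX2 : Integrable (fun ω => ‖X ω‖ ^ 2) μ)
    (Γ : Finset H) (hΓne : Γ.Nonempty)
    (p : H → H) (hpm : Measurable p)
    (hp : ∀ ξ, p ξ ∈ Γ ∧ ‖ξ - p ξ‖ = Metric.infDist ξ (Γ : Set H))
    -- stationarity of the quantizer
    (hstat : μ[X | MeasurableSpace.comap (fun ω => p (X ω)) inferInstance]
      =ᵐ[μ] (fun ω => p (X ω)))
    (F : H → ℝ) (F' : H → H →L[ℝ] ℝ) (L : NNReal)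
    (hFdiff : ∀ x, HasFDerivAt F (F' x) x)
    (hF' : LipschitzWith L F') :
    |(∫ ω, F (X ω) ∂μ) - ∫ ω, F (p (X ω)) ∂μ|
      ≤ (L : ℝ) * ∫ ω, ‖X ω - p (X ω)‖ ^ 2 ∂μ :=
  stationary_second_order_cubature_general (mΩ := mΩ) μ X hXm hX2 Γ p hpm hp hstat F F' L hFdiff hF'
end

section
/- Let X, Y be H-valued random vectors, F : H → ℝ Lipschitz with constant [F]_Lip, and suppose E(F(X)|Y) = φ(Y) where φ : H → ℝ is Lipschitz with constant [φ]_Lip. Let X̂, Ŷ be quantizations of X and Y respectively, with Ŷ σ(Y)-measurable. Then ‖E(F(X)|Y) − E(F(X̂)|Ŷ)‖₂ ≤ [F]_Lip ‖X − X̂‖₂ + [φ]_Lip ‖Y − Ŷ‖₂. -/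
/-!
Write `g = E(F(X)|Y) = φ(Y)`. Since `σ(Ŷ) ⊆ σ(Y)`, the tower property and linearity give
`g − E(F(X̂)|Ŷ) = (g − E(g|Ŷ)) + E(F(X) − F(X̂)|Ŷ)`.
The second term is bounded by `[F]_Lip ‖X − X̂‖₂` because conditional expectation is an
`L²`-contraction. The first is bounded by `‖g − φ(Ŷ)‖₂ = ‖φ(Y) − φ(Ŷ)‖₂ ≤ [φ]_Lip ‖Y − Ŷ‖₂`,
because `E(g|Ŷ)` is the orthogonal projection of `g` onto the `σ(Ŷ)`-measurable functions,
among which is `φ(Ŷ)`.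
-/

open MeasureTheory

namespace MeasureTheory

variable {Ω E : Type*} {m m₀ : MeasurableSpace Ω} {μ : Measure Ω}

section NormedAddCommGroup

variable [NormedAddCommGroup E] {F : Type*} [NormedAddCommGroup F] {p : ENNReal}

lemma memLp_of_finite_range [IsFiniteMeasure μ] {g : Ω → E} (hgm : AEStronglyMeasurable g μ)
    (hg : (Set.range g).Finite) : MemLp g p μ := by
  obtain ⟨C, hC⟩ := (hg.image norm).bddAbove
  exact MemLp.of_bound hgm C (.of_forall fun ω ↦ hC ⟨g ω, Set.mem_range_self ω, rfl⟩)

lemma _root_.LipschitzWith.memLp_comp [IsFiniteMeasure μ] {K : NNReal} {φ : E → F}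
    (hφ : LipschitzWith K φ) {f : Ω → E} (hf : MemLp f p μ) : MemLp (φ ∘ f) p μ := by
  have h₀ : LipschitzWith K (fun x ↦ φ x - φ 0) := by
    simpa using hφ.sub (LipschitzWith.const (φ 0))
  convert (h₀.comp_memLp (sub_self _) hf).add (memLp_const (φ 0)) using 1
  ext
  simp

lemma _root_.LipschitzWith.eLpNorm_comp_sub_le {K : NNReal} {φ : E → F}
    (hφ : LipschitzWith K φ) (f g : Ω → E) :
    eLpNorm (φ ∘ f - φ ∘ g) p μ ≤ K * eLpNorm (f - g) p μ := by
  have h := eLpNorm_le_mul_eLpNorm_of_ae_le_mul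
    (.of_forall fun ω ↦ hφ.norm_sub_le (f ω) (g ω)) p (μ := μ)
  rwa [ENNReal.ofReal_coe_nnreal] at h

end NormedAddCommGroup

variable [NormedAddCommGroup E] [InnerProductSpace ℝ E] [CompleteSpace E]

lemma eLpNorm_sub_condExp_le_eLpNorm_sub [IsFiniteMeasure μ] (hm : m ≤ m₀) {f g : Ω → E}
    (hf : MemLp f 2 μ) (hg : MemLp g 2 μ) (hgm : AEStronglyMeasurable[m] g μ) :
    eLpNorm (f - μ[f|m]) 2 μ ≤ eLpNorm (f - g) 2 μ := by
  have : Fact (m ≤ m₀) := ⟨hm⟩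
  have hG : hg.toLp g ∈ lpMeas E ℝ m 2 μ :=
    mem_lpMeas_iff_aestronglyMeasurable.2 (hgm.congr hg.coeFn_toLp.symm)
  have hproj : ‖hf.toLp f - condExpL2 E ℝ hm (hf.toLp f)‖ ≤ ‖hf.toLp f - hg.toLp g‖ := by
    change ‖_ - (lpMeas E ℝ m 2 μ).starProjection _‖ ≤ _
    rw [Submodule.starProjection_minimal]
    exact ciInf_le ⟨0, Set.forall_mem_range.2 fun _ ↦ norm_nonneg _⟩
      (⟨_, hG⟩ : lpMeas E ℝ m 2 μ)
  rw [← enorm_le_iff_norm_le, Lp.enorm_def, Lp.enorm_def] at hproj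
  calc eLpNorm (f - μ[f|m]) 2 μ
      = eLpNorm (⇑(hf.toLp f - condExpL2 E ℝ hm (hf.toLp f))) 2 μ := by
        refine eLpNorm_congr_ae ?_
        filter_upwards [Lp.coeFn_sub (hf.toLp f) (condExpL2 E ℝ hm (hf.toLp f)), hf.coeFn_toLp,
          hf.condExpL2_ae_eq_condExp (𝕜 := ℝ) hm] with ω h₁ h₂ h₃
        rw [h₁, Pi.sub_apply, Pi.sub_apply, h₂, h₃]
    _ ≤ eLpNorm (⇑(hf.toLp f - hg.toLp g)) 2 μ := hproj
    _ = eLpNorm (f - g) 2 μ := by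
        refine eLpNorm_congr_ae ?_
        filter_upwards [Lp.coeFn_sub (hf.toLp f) (hg.toLp g), hf.coeFn_toLp, hg.coeFn_toLp]
          with ω h₁ h₂ h₃
        rw [h₁, Pi.sub_apply, Pi.sub_apply, h₂, h₃]

lemma eLpNorm_condExp_sub_condExp_le [IsFiniteMeasure μ] {m' : MeasurableSpace Ω}
    (hm' : m' ≤ m) (hm : m ≤ m₀) {f f' g : Ω → E} (hf : MemLp f 2 μ) (hf' : Integrable f' μ)
    (hg : MemLp g 2 μ) (hgm : AEStronglyMeasurable[m'] g μ) :
    eLpNorm (μ[f|m] - μ[f'|m']) 2 μ ≤ eLpNorm (f - f') 2 μ + eLpNorm (μ[f|m] - g) 2 μ := by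
  have hcond : MemLp (μ[f|m]) 2 μ := hf.condExp one_le_two
  have hdecomp : μ[f|m] - μ[f'|m'] =ᵐ[μ] μ[f - f'|m'] + (μ[f|m] - μ[μ[f|m]|m']) := by
    filter_upwards [condExp_sub (hf.integrable one_le_two) hf' m',
      condExp_condExp_of_le (f := f) hm' hm] with ω hsub htower
    simp only [Pi.add_apply, Pi.sub_apply] at hsub htower ⊢
    rw [hsub, htower]
    abel
  calc eLpNorm (μ[f|m] - μ[f'|m']) 2 μ
      = eLpNorm (μ[f - f'|m'] + (μ[f|m] - μ[μ[f|m]|m'])) 2 μ := eLpNorm_congr_ae hdecomp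
    _ ≤ eLpNorm (μ[f - f'|m']) 2 μ + eLpNorm (μ[f|m] - μ[μ[f|m]|m']) 2 μ :=
        eLpNorm_add_le integrable_condExp.1 (hcond.1.sub integrable_condExp.1) one_le_two
    _ ≤ eLpNorm (f - f') 2 μ + eLpNorm (μ[f|m] - g) 2 μ :=
        add_le_add (eLpNorm_condExp_le_eLpNorm _ one_le_two)
          (eLpNorm_sub_condExp_le_eLpNorm_sub (hm'.trans hm) hcond hg hgm)

end MeasureTheory

theorem quantized_conditional_expectation_general
    {H Ω : Type*} [NormedAddCommGroup H]
    [TopologicalSpace.SeparableSpace H]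
    [MeasurableSpace H] [BorelSpace H]
    {mΩ : MeasurableSpace Ω} (μ : Measure Ω) [IsProbabilityMeasure μ]
    (X Y : Ω → H) (hXm : Measurable X) (hYm : Measurable Y)
    (hX2 : Integrable (fun ω => ‖X ω‖ ^ 2) μ)
    (Xq Yq : Ω → H) (hXqm : Measurable Xq)
    (hXqfin : (Set.range Xq).Finite) (hYqfin : (Set.range Yq).Finite)
    -- `Ŷ` is `σ(Y)`-measurable
    (hYqm : Measurable[MeasurableSpace.comap Y inferInstance] Yq)
    (F : H → ℝ) (KF : NNReal) (hF : LipschitzWith KF F)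
    (φ : H → ℝ) (Kφ : NNReal) (hφ : LipschitzWith Kφ φ)
    -- `φ` is a version of the conditional expectation of `F(X)` given `Y`
    (hφver : μ[(fun ω => F (X ω)) | MeasurableSpace.comap Y inferInstance]
      =ᵐ[μ] (fun ω => φ (Y ω))) :
    eLpNorm (fun ω =>
        (μ[(fun ω' => F (X ω')) | MeasurableSpace.comap Y inferInstance]) ω
          - (μ[(fun ω' => F (Xq ω')) | MeasurableSpace.comap Yq inferInstance]) ω)
        2 μ
      ≤ (KF : ENNReal) * eLpNorm (fun ω => X ω - Xq ω) 2 μ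
        + (Kφ : ENNReal) * eLpNorm (fun ω => Y ω - Yq ω) 2 μ := by
  have hm : MeasurableSpace.comap Y inferInstance ≤ mΩ := hYm.comap_le
  have hFX : MemLp (F ∘ X) 2 μ :=
    hF.memLp_comp ((memLp_two_iff_integrable_sq_norm hXm.aestronglyMeasurable).2 hX2)
  have hFXq : MemLp (F ∘ Xq) 2 μ :=
    memLp_of_finite_range (hF.continuous.measurable.comp hXqm).aestronglyMeasurable
      (Set.range_comp F Xq ▸ hXqfin.image F)
  have hφYq : MemLp (φ ∘ Yq) 2 μ :=
    memLp_of_finite_range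
      (hφ.continuous.measurable.comp (hYqm.mono hm le_rfl)).aestronglyMeasurable
      (Set.range_comp φ Yq ▸ hYqfin.image φ)
  calc _ ≤ eLpNorm (F ∘ X - F ∘ Xq) 2 μ
        + eLpNorm (μ[F ∘ X | MeasurableSpace.comap Y inferInstance] - φ ∘ Yq) 2 μ :=
        eLpNorm_condExp_sub_condExp_le hYqm.comap_le hm hFX (hFXq.integrable one_le_two) hφYq
          (hφ.continuous.measurable.comp (comap_measurable Yq)).aestronglyMeasurable
    _ = eLpNorm (F ∘ X - F ∘ Xq) 2 μ + eLpNorm (φ ∘ Y - φ ∘ Yq) 2 μ := by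
        congr 1
        exact eLpNorm_congr_ae (hφver.sub .rfl)
    _ ≤ _ := add_le_add (hF.eLpNorm_comp_sub_le X Xq) (hφ.eLpNorm_comp_sub_le Y Yq)

/-- quantized approximation of a conditional expectation:
`‖E(F(X)|Y) − E(F(X̂)|Ŷ)‖₂ ≤ [F]_Lip ‖X − X̂‖₂ + [φ]_Lip ‖Y − Ŷ‖₂`. -/
theorem quantized_conditional_expectation
    {H Ω : Type*} [NormedAddCommGroup H] [InnerProductSpace ℝ H]
    [TopologicalSpace.SeparableSpace H] [CompleteSpace H]
    [MeasurableSpace H] [BorelSpace H]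
    {mΩ : MeasurableSpace Ω} (μ : Measure Ω) [IsProbabilityMeasure μ]
    (X Y : Ω → H) (hXm : Measurable X) (hYm : Measurable Y)
    (hX2 : Integrable (fun ω => ‖X ω‖ ^ 2) μ)
    (hY2 : Integrable (fun ω => ‖Y ω‖ ^ 2) μ)
    (Xq Yq : Ω → H) (hXqm : Measurable Xq)
    (hXqfin : (Set.range Xq).Finite) (hYqfin : (Set.range Yq).Finite)
    -- `Ŷ` is `σ(Y)`-measurable
    (hYqm : Measurable[MeasurableSpace.comap Y inferInstance] Yq)
    (F : H → ℝ) (KF : NNReal) (hF : LipschitzWith KF F)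
    (φ : H → ℝ) (Kφ : NNReal) (hφ : LipschitzWith Kφ φ)
    -- `φ` is a version of the conditional expectation of `F(X)` given `Y`
    (hφver : μ[(fun ω => F (X ω)) | MeasurableSpace.comap Y inferInstance]
      =ᵐ[μ] (fun ω => φ (Y ω))) :
    eLpNorm (fun ω =>
        (μ[(fun ω' => F (X ω')) | MeasurableSpace.comap Y inferInstance]) ω
          - (μ[(fun ω' => F (Xq ω')) | MeasurableSpace.comap Yq inferInstance]) ω)
        2 μ
      ≤ (KF : ENNReal) * eLpNorm (fun ω => X ω - Xq ω) 2 μ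
        + (Kφ : ENNReal) * eLpNorm (fun ω => Y ω - Yq ω) 2 μ :=
  quantized_conditional_expectation_general (mΩ := mΩ) μ X Y hXm hYm hX2 Xq Yq hXqm hXqfin hYqfin
    hYqm F KF hF φ Kφ hφ hφver
end

section
/- For the uniform distribution U on an interval [a,b], the unique optimal quadratic N-quantizer is the midpoint grid Γ = { a + (2k−1)(b−a)/(2N) : k = 1,…,N }, and the resulting minimal quadratic quantization error equals (b−a)/(2N√3). -/
/-!
Sort the points of `Γ` as `γ₀ < ⋯ < γₙ₋₁` and cut `[a, b]` at the midpoints of consecutive points,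
clipped to `[a, b]`. On the `i`-th cell, of length `Lᵢ`, the nearest point of `Γ` is `γᵢ`, and the
integral of `(x - γᵢ)²` over the cell is `Lᵢ³/12 + Lᵢ dᵢ²`, where `dᵢ` is the offset of `γᵢ` from the
centre of the cell. With `c = (b - a)/N`, so that `∑ Lᵢ = N c`, the tangent-line bound
`L³ ≥ 3c²L - 2c³` for `L ≥ 0` gives `∑ (Lᵢ³/12 + Lᵢ dᵢ²) ≥ N c³/12 = (b - a)³/(12 N²)`, with
equality only if `n = N`, every `Lᵢ = c` and every `dᵢ = 0`, which forces `Γ` to be the midpoint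
grid. The grid attains the bound: on each of the `N` cells of length `c`, its distance function is at
most the distance to the centre of the cell.
-/

open MeasureTheory Metric Finset

section SortedPoint

variable {α : Type*} [LinearOrder α] [Inhabited α] {Γ : Finset α} {i j : ℕ}

/-- The `i`-th smallest element of `Γ`, counting from `0`; junk value `default` for `#Γ ≤ i`. -/
noncomputable def sortedPoint (Γ : Finset α) (i : ℕ) : α :=
  if h : i < #Γ then Γ.orderEmbOfFin rfl ⟨i, h⟩ else default

lemma sortedPoint_mem (h : i < #Γ) : sortedPoint Γ i ∈ Γ := by
  rw [sortedPoint, dif_pos h]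
  exact Γ.orderEmbOfFin_mem rfl _

lemma sortedPoint_lt_sortedPoint (hij : i < j) (hj : j < #Γ) :
    sortedPoint Γ i < sortedPoint Γ j := by
  rw [sortedPoint, sortedPoint, dif_pos hj, dif_pos (hij.trans hj)]
  exact (Γ.orderEmbOfFin rfl).strictMono (Fin.mk_lt_mk.2 hij)

lemma sortedPoint_le_sortedPoint (hij : i ≤ j) (hj : j < #Γ) :
    sortedPoint Γ i ≤ sortedPoint Γ j :=
  hij.eq_or_lt.elim (fun h => h ▸ le_rfl) fun h => (sortedPoint_lt_sortedPoint h hj).le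

lemma exists_sortedPoint_eq {y : α} (hy : y ∈ Γ) : ∃ i < #Γ, sortedPoint Γ i = y := by
  rw [← Finset.mem_coe, ← Γ.range_orderEmbOfFin rfl] at hy
  obtain ⟨⟨i, hi⟩, rfl⟩ := hy
  exact ⟨i, hi, dif_pos hi⟩

end SortedPoint

lemma Metric.infDist_eq_dist_of_forall_le {E : Type*} [PseudoMetricSpace E] {s : Set E}
    {x p : E} (hp : p ∈ s) (h : ∀ y ∈ s, dist x p ≤ dist x y) : infDist x s = dist x p :=
  le_antisymm (infDist_le_dist_of_mem hp) ((le_infDist ⟨p, hp⟩).2 h)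

section Midpoint

variable {𝕜 : Type*} [CommRing 𝕜] [LinearOrder 𝕜] [IsStrictOrderedRing 𝕜] {p q x : 𝕜}

lemma abs_sub_le_abs_sub_of_add_le (hpq : p ≤ q) (h : p + q ≤ 2 * x) : |x - q| ≤ |x - p| :=
  sq_le_sq.1 (by nlinarith)

lemma abs_sub_le_abs_sub_of_le_add (hpq : p ≤ q) (h : 2 * x ≤ p + q) : |x - p| ≤ |x - q| :=
  sq_le_sq.1 (by nlinarith)

end Midpoint

section Voronoi

variable {a b x : ℝ} {Γ : Finset ℝ} {i : ℕ}

lemma infDist_eq_abs_sub_sortedPoint (hi : i < #Γ)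
    (hl : 0 < i → (sortedPoint Γ (i - 1) + sortedPoint Γ i) / 2 ≤ x)
    (hr : i + 1 < #Γ → x ≤ (sortedPoint Γ i + sortedPoint Γ (i + 1)) / 2) :
    infDist x Γ = |x - sortedPoint Γ i| := by
  rw [← Real.dist_eq]
  refine infDist_eq_dist_of_forall_le (mem_coe.2 (sortedPoint_mem hi)) fun y hy => ?_
  obtain ⟨j, hj, rfl⟩ := exists_sortedPoint_eq (mem_coe.1 hy)
  rw [Real.dist_eq, Real.dist_eq]
  rcases lt_trichotomy j i with hji | rfl | hij
  · have := sortedPoint_le_sortedPoint (Γ := Γ) (Nat.le_sub_one_of_lt hji) (by omega)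
    exact abs_sub_le_abs_sub_of_add_le (sortedPoint_lt_sortedPoint hji hi).le
      (by linarith [hl (by omega)])
  · exact le_rfl
  · have := sortedPoint_le_sortedPoint (Γ := Γ) (Nat.succ_le_of_lt hij) hj
    exact abs_sub_le_abs_sub_of_le_add (sortedPoint_lt_sortedPoint hij hj).le
      (by linarith [hr (by omega)])

/-- The boundaries of the Voronoi cells of `Γ`, clipped to `[a, b]`: the `i`-th cell is
`[voronoiCut a b Γ i, voronoiCut a b Γ (i + 1)]`, for `i < #Γ`. -/
noncomputable def voronoiCut (a b : ℝ) (Γ : Finset ℝ) : ℕ → ℝ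
  | 0 => a
  | i + 1 =>
    if #Γ ≤ i + 1 then b else max a (min b ((sortedPoint Γ i + sortedPoint Γ (i + 1)) / 2))

@[simp] lemma voronoiCut_zero : voronoiCut a b Γ 0 = a := rfl

lemma voronoiCut_card (hΓ : Γ.Nonempty) : voronoiCut a b Γ #Γ = b := by
  obtain ⟨n, hn⟩ := Nat.exists_eq_add_one_of_ne_zero hΓ.card_pos.ne'
  rw [hn, voronoiCut, if_pos hn.le]

lemma voronoiCut_mem_Icc (hab : a ≤ b) : ∀ i, voronoiCut a b Γ i ∈ Set.Icc a b
  | 0 => ⟨le_rfl, hab⟩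
  | i + 1 => by
    rw [voronoiCut]
    split_ifs
    · exact ⟨hab, le_rfl⟩
    · exact ⟨le_max_left _ _, max_le hab (min_le_left _ _)⟩

lemma voronoiCut_mono (hab : a ≤ b) : Monotone (voronoiCut a b Γ) := by
  refine monotone_nat_of_le_succ fun i => ?_
  rcases i with _ | i
  · exact (voronoiCut_mem_Icc hab 1).1
  rw [voronoiCut, voronoiCut]
  split_ifs with h₁ h₂ h₂
  · exact le_rfl
  · omega
  · exact max_le hab (min_le_left _ _)
  · gcongr
    · exact sortedPoint_le_sortedPoint i.le_succ (by omega)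
    · exact sortedPoint_le_sortedPoint (i + 1).le_succ (by omega)

lemma midpoint_le_voronoiCut (hi : i + 1 < #Γ) (hb : voronoiCut a b Γ (i + 1) < b) :
    (sortedPoint Γ i + sortedPoint Γ (i + 1)) / 2 ≤ voronoiCut a b Γ (i + 1) := by
  rw [voronoiCut, if_neg hi.not_ge] at hb ⊢
  rw [min_eq_right]
  · exact le_max_right _ _
  · by_contra! h
    rw [min_eq_left h.le] at hb
    exact (le_max_right a b).not_gt hb

lemma voronoiCut_le_midpoint (hi : i + 1 < #Γ) (ha : a < voronoiCut a b Γ (i + 1)) :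
    voronoiCut a b Γ (i + 1) ≤ (sortedPoint Γ i + sortedPoint Γ (i + 1)) / 2 := by
  rw [voronoiCut, if_neg hi.not_ge] at ha ⊢
  rw [max_eq_right]
  · exact min_le_right _ _
  · by_contra! h
    rw [max_eq_left h.le] at ha
    exact lt_irrefl _ ha

lemma infDist_eq_abs_sub_of_mem_voronoiCell (hab : a ≤ b) (hi : i < #Γ)
    (hlt : voronoiCut a b Γ i < voronoiCut a b Γ (i + 1))
    (hx : x ∈ Set.Icc (voronoiCut a b Γ i) (voronoiCut a b Γ (i + 1))) :
    infDist x Γ = |x - sortedPoint Γ i| := by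
  refine infDist_eq_abs_sub_sortedPoint hi (fun hi₀ => ?_) fun hi₁ => ?_
  · obtain ⟨j, rfl⟩ := Nat.exists_eq_add_one_of_ne_zero hi₀.ne'
    rw [Nat.add_sub_cancel]
    exact (midpoint_le_voronoiCut hi (hlt.trans_le (voronoiCut_mem_Icc hab _).2)).trans hx.1
  · exact hx.2.trans (voronoiCut_le_midpoint hi₁ ((voronoiCut_mem_Icc hab _).1.trans_lt hlt))

end Voronoi

lemma integral_sub_const_sq (u v p : ℝ) :
    ∫ x in u..v, (x - p) ^ 2 = (v - u) ^ 3 / 12 + (v - u) * (p - (u + v) / 2) ^ 2 := by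
  rw [intervalIntegral.integral_comp_sub_right (fun x => x ^ 2), integral_pow]
  ring

lemma integral_infDist_sq_le_sum {Γ : Set ℝ} {c p : ℕ → ℝ} {n : ℕ} (hc : Monotone c)
    (hp : ∀ i < n, p i ∈ Γ) :
    ∫ x in c 0..c n, infDist x Γ ^ 2 ≤ ∑ i ∈ range n, ∫ x in c i..c (i + 1), (x - p i) ^ 2 := by
  have hcont : Continuous fun x => infDist x Γ ^ 2 := (continuous_infDist_pt Γ).pow 2
  rw [← intervalIntegral.sum_integral_adjacent_intervals fun i _ => hcont.intervalIntegrable _ _]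
  gcongr with i hi
  refine intervalIntegral.integral_mono_on (hc i.le_succ) (hcont.intervalIntegrable _ _)
    ((by fun_prop : Continuous fun x : ℝ => (x - p i) ^ 2).intervalIntegrable _ _) fun x _ => ?_
  rw [← sq_abs (x - p i), ← Real.dist_eq]
  exact pow_le_pow_left₀ infDist_nonneg (infDist_le_dist_of_mem (hp i (mem_range.1 hi))) 2

lemma integral_infDist_sq_eq_sum {a b : ℝ} {Γ : Finset ℝ} (hab : a ≤ b) (hΓ : Γ.Nonempty) :
    ∫ x in a..b, infDist x Γ ^ 2 = ∑ i ∈ range #Γ,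
      ((voronoiCut a b Γ (i + 1) - voronoiCut a b Γ i) ^ 3 / 12 +
        (voronoiCut a b Γ (i + 1) - voronoiCut a b Γ i) *
          (sortedPoint Γ i - (voronoiCut a b Γ i + voronoiCut a b Γ (i + 1)) / 2) ^ 2) := by
  have hcont : Continuous fun x : ℝ => infDist x (Γ : Set ℝ) ^ 2 :=
    (continuous_infDist_pt _).pow 2
  have hsum := intervalIntegral.sum_integral_adjacent_intervals (a := voronoiCut a b Γ) (n := #Γ)
    fun i _ => hcont.intervalIntegrable (μ := volume) _ _
  rw [voronoiCut_zero, voronoiCut_card hΓ] at hsum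
  rw [← hsum]
  refine sum_congr rfl fun i hi => ?_
  rw [← integral_sub_const_sq]
  rcases (voronoiCut_mono hab (Γ := Γ) i.le_succ).eq_or_lt with heq | hlt
  · simp [heq]
  refine intervalIntegral.integral_congr fun x hx => ?_
  rw [Set.uIcc_of_le hlt.le] at hx
  simp only [infDist_eq_abs_sub_of_mem_voronoiCell hab (mem_range.1 hi) hlt hx, sq_abs]

section SumCubes

variable {ι : Type*} {s : Finset ι} {L d : ι → ℝ} {N : ℕ} {c : ℝ}

lemma sum_cube_add_mul_sq_sub_eq (hc : ∑ i ∈ s, L i = N * c) :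
    ∑ i ∈ s, (L i ^ 3 / 12 + L i * d i ^ 2) - N * c ^ 3 / 12 =
      ∑ i ∈ s, ((L i - c) ^ 2 * (L i + 2 * c) / 12 + L i * d i ^ 2) + (N - #s) * c ^ 3 / 6 := by
  have hterm : ∀ i ∈ s, (L i - c) ^ 2 * (L i + 2 * c) / 12 + L i * d i ^ 2 =
      (L i ^ 3 / 12 + L i * d i ^ 2) - c ^ 2 / 4 * L i + c ^ 3 / 6 := fun i _ => by ring
  rw [sum_congr rfl hterm]
  simp only [sum_add_distrib, sum_sub_distrib, ← mul_sum, hc, sum_const, nsmul_eq_mul]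
  ring

lemma le_sum_cube_add_mul_sq (hL : ∀ i ∈ s, 0 ≤ L i) (hc₀ : 0 ≤ c) (hs : #s ≤ N)
    (hc : ∑ i ∈ s, L i = N * c) :
    N * c ^ 3 / 12 ≤ ∑ i ∈ s, (L i ^ 3 / 12 + L i * d i ^ 2) := by
  have hsN : ((#s : ℕ) : ℝ) ≤ N := by exact_mod_cast hs
  have hexcess := sum_cube_add_mul_sq_sub_eq (d := d) hc
  have hterms : 0 ≤ ∑ i ∈ s, ((L i - c) ^ 2 * (L i + 2 * c) / 12 + L i * d i ^ 2) :=
    sum_nonneg fun i hi => by have := hL i hi; positivity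
  nlinarith [pow_nonneg hc₀ 3]

lemma eq_of_sum_cube_add_mul_sq_eq (hL : ∀ i ∈ s, 0 ≤ L i) (hc₀ : 0 < c) (hs : #s ≤ N)
    (hc : ∑ i ∈ s, L i = N * c) (h : ∑ i ∈ s, (L i ^ 3 / 12 + L i * d i ^ 2) = N * c ^ 3 / 12) :
    #s = N ∧ ∀ i ∈ s, L i = c ∧ d i = 0 := by
  have hsN : ((#s : ℕ) : ℝ) ≤ N := by exact_mod_cast hs
  have hterm : ∀ i ∈ s, 0 ≤ (L i - c) ^ 2 * (L i + 2 * c) / 12 + L i * d i ^ 2 :=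
    fun i hi => by have := hL i hi; positivity
  have hzero := sum_cube_add_mul_sq_sub_eq (d := d) hc
  rw [h, sub_self, eq_comm, add_eq_zero_iff_of_nonneg (sum_nonneg hterm) (by positivity),
    sum_eq_zero_iff_of_nonneg hterm] at hzero
  obtain ⟨hcells, hcard⟩ := hzero
  refine ⟨(by simpa [hc₀.ne', sub_eq_zero] using hcard : N = #s).symm, fun i hi => ?_⟩
  have hpos : 0 < L i + 2 * c := by linarith [hL i hi]
  obtain ⟨hLc, hd⟩ := (add_eq_zero_iff_of_nonneg
    (div_nonneg (mul_nonneg (sq_nonneg _) hpos.le) (by norm_num))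
    (mul_nonneg (hL i hi) (sq_nonneg _))).1 (hcells i hi)
  replace hLc : L i = c := by simpa [sub_eq_zero, hpos.ne'] using hLc
  exact ⟨hLc, by simpa [hLc, hc₀.ne'] using hd⟩

end SumCubes

section Interval

variable {a b : ℝ} {Γ : Finset ℝ} {N : ℕ}

noncomputable def midpointGrid (a b : ℝ) (N : ℕ) : Finset ℝ :=
  (range N).image fun k : ℕ => a + (2 * (k : ℝ) + 1) * (b - a) / (2 * N)

lemma sum_voronoiCell_length (hΓ : Γ.Nonempty) :
    ∑ i ∈ range #Γ, (voronoiCut a b Γ (i + 1) - voronoiCut a b Γ i) = b - a := by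
  rw [sum_range_sub, voronoiCut_card hΓ, voronoiCut_zero]

theorem le_integral_infDist_sq (hab : a ≤ b) (hΓ : Γ.Nonempty) (hN : #Γ ≤ N) :
    (b - a) ^ 3 / (12 * N ^ 2) ≤ ∫ x in a..b, infDist x Γ ^ 2 := by
  have hN₀ : (N : ℝ) ≠ 0 := by exact_mod_cast (hΓ.card_pos.trans_le hN).ne'
  have hbound := le_sum_cube_add_mul_sq (s := range #Γ) (N := N) (c := (b - a) / N)
    (d := fun i => sortedPoint Γ i - (voronoiCut a b Γ i + voronoiCut a b Γ (i + 1)) / 2)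
    (fun i _ => sub_nonneg.2 (voronoiCut_mono hab i.le_succ))
    (div_nonneg (sub_nonneg.2 hab) N.cast_nonneg) (by rwa [card_range])
    (by rw [sum_voronoiCell_length hΓ, mul_div_cancel₀ _ hN₀])
  rw [integral_infDist_sq_eq_sum hab hΓ]
  convert hbound using 1
  field_simp

theorem eq_midpointGrid_of_integral_infDist_sq_eq (hab : a < b) (hΓ : Γ.Nonempty) (hN : #Γ ≤ N)
    (h : ∫ x in a..b, infDist x Γ ^ 2 = (b - a) ^ 3 / (12 * N ^ 2)) : Γ = midpointGrid a b N := by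
  have hN₀ : (N : ℝ) ≠ 0 := by exact_mod_cast (hΓ.card_pos.trans_le hN).ne'
  obtain ⟨hcard, hcell⟩ := eq_of_sum_cube_add_mul_sq_eq (s := range #Γ) (N := N)
    (c := (b - a) / N)
    (d := fun i => sortedPoint Γ i - (voronoiCut a b Γ i + voronoiCut a b Γ (i + 1)) / 2)
    (fun i _ => sub_nonneg.2 (voronoiCut_mono hab.le i.le_succ))
    (div_pos (sub_pos.2 hab) (by positivity)) (by rwa [card_range])
    (by rw [sum_voronoiCell_length hΓ, mul_div_cancel₀ _ hN₀])
    (by rw [← integral_infDist_sq_eq_sum hab.le hΓ, h]; field_simp)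
  rw [card_range] at hcard
  have hcut : ∀ i ≤ #Γ, voronoiCut a b Γ i = a + i * ((b - a) / N) := by
    intro i
    induction i with
    | zero => simp
    | succ i ih =>
      intro hi
      have := (hcell i (mem_range.2 hi)).1
      push_cast
      linarith [ih (by omega)]
  have hsub : Γ ⊆ midpointGrid a b N := by
    intro y hy
    obtain ⟨i, hi, rfl⟩ := exists_sortedPoint_eq hy
    have hmid := (hcell i (mem_range.2 hi)).2
    rw [hcut i hi.le, hcut (i + 1) hi] at hmid
    refine mem_image.2 ⟨i, mem_range.2 (hcard ▸ hi), ?_⟩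
    rw [sub_eq_zero.1 hmid]
    push_cast
    field_simp
    ring
  exact eq_of_subset_of_card_le hsub (card_image_le.trans (by rw [card_range, hcard]))

lemma integral_infDist_sq_midpointGrid_le (hab : a ≤ b) (hN : 0 < N) :
    ∫ x in a..b, infDist x (midpointGrid a b N) ^ 2 ≤ (b - a) ^ 3 / (12 * N ^ 2) := by
  have hN₀ : (N : ℝ) ≠ 0 := by positivity
  set c : ℕ → ℝ := fun k => a + k * ((b - a) / N)
  have hc : Monotone c := fun i j hij => by
    have : 0 ≤ (b - a) / N := div_nonneg (sub_nonneg.2 hab) N.cast_nonneg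
    simp only [c]
    gcongr
  calc ∫ x in a..b, infDist x (midpointGrid a b N) ^ 2
      = ∫ x in c 0..c N, infDist x (midpointGrid a b N) ^ 2 := by simp [c, mul_div_cancel₀ _ hN₀]
    _ ≤ ∑ k ∈ range N, ∫ x in c k..c (k + 1),
          (x - (a + (2 * (k : ℝ) + 1) * (b - a) / (2 * N))) ^ 2 :=
      integral_infDist_sq_le_sum hc fun k hk => mem_coe.2 (mem_image_of_mem _ (mem_range.2 hk))
    _ = ∑ k ∈ range N, ((b - a) / N) ^ 3 / 12 := sum_congr rfl fun k _ => by
      rw [integral_sub_const_sq]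
      simp only [c]
      push_cast
      field_simp
      ring
    _ = (b - a) ^ 3 / (12 * N ^ 2) := by
      rw [sum_const, card_range, nsmul_eq_mul]
      field_simp

end Interval

lemma integral_normalized_Icc {a b : ℝ} (hab : a ≤ b) (f : ℝ → ℝ) :
    ∫ x, f x ∂((ENNReal.ofReal (b - a))⁻¹ • volume.restrict (Set.Icc a b)) =
      (b - a)⁻¹ * ∫ x in a..b, f x := by
  rw [integral_smul_measure, ENNReal.toReal_inv, ENNReal.toReal_ofReal (sub_nonneg.2 hab),
    intervalIntegral.integral_of_le hab, smul_eq_mul, integral_Icc_eq_integral_Ioc]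

/-- for the uniform distribution on `[a,b]`, the midpoint grid
`{a + (2k−1)(b−a)/(2N), k = 1,…,N}` is the unique optimal quadratic
`N`-quantizer, with error `(b−a)/(2N√3)`. -/
theorem uniform_optimal_quantizer
    (a b : ℝ) (hab : a < b) (N : ℕ) (hN : 0 < N) :
    letI μ : Measure ℝ := (ENNReal.ofReal (b - a))⁻¹ • volume.restrict (Set.Icc a b)
    letI err : Finset ℝ → ℝ :=
      fun Γ => Real.sqrt (∫ x, Metric.infDist x (Γ : Set ℝ) ^ 2 ∂μ)
    letI Γmid : Finset ℝ :=
      (Finset.range N).image (fun k : ℕ => a + (2 * (k : ℝ) + 1) * (b - a) / (2 * N))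
    err Γmid = (b - a) / (2 * N * Real.sqrt 3) ∧
      ∀ Γ : Finset ℝ, Γ.Nonempty → Γ.card ≤ N →
        (b - a) / (2 * N * Real.sqrt 3) ≤ err Γ ∧
          (err Γ = (b - a) / (2 * N * Real.sqrt 3) → Γ = Γmid) := by
  beta_reduce
  have hS : 0 < b - a := sub_pos.2 hab
  have herr (Γ : Finset ℝ) :
      √(∫ x, infDist x (Γ : Set ℝ) ^ 2 ∂((ENNReal.ofReal (b - a))⁻¹ •
        volume.restrict (Set.Icc a b))) = √((b - a)⁻¹ * ∫ x in a..b, infDist x Γ ^ 2) := by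
    rw [integral_normalized_Icc hab.le]
  have hopt : (b - a) / (2 * N * √3) = √((b - a)⁻¹ * ((b - a) ^ 3 / (12 * N ^ 2))) := by
    rw [eq_comm, Real.sqrt_eq_iff_eq_sq (by positivity) (by positivity), div_pow, mul_pow,
      mul_pow, Real.sq_sqrt zero_le_three]
    field_simp
    ring
  have hmid : (midpointGrid a b N).Nonempty ∧ #(midpointGrid a b N) ≤ N :=
    ⟨(nonempty_range_iff.2 hN.ne').image _, card_image_le.trans (card_range N).le⟩
  simp only [herr, hopt]
  refine ⟨le_antisymm ?_ ?_, fun Γ hΓ hcard => ⟨?_, fun h => ?_⟩⟩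
  · gcongr
    exact integral_infDist_sq_midpointGrid_le hab.le hN
  · gcongr
    exact le_integral_infDist_sq hab.le hmid.1 hmid.2
  · gcongr
    exact le_integral_infDist_sq hab.le hΓ hcard
  · rw [Real.sqrt_inj (mul_nonneg (inv_nonneg.2 hS.le)
      (intervalIntegral.integral_nonneg hab.le fun _ _ => sq_nonneg _)) (by positivity)] at h
    exact eq_midpointGrid_of_integral_infDist_sq_eq hab hΓ hcard
      (mul_left_cancel₀ (inv_ne_zero hS.ne') h)
end

section
/- Let W = Σ_{n≥1} √λ_n ξ_n e_n be the Karhunen–Loève expansion of Brownian motion (ξ_n i.i.d. standard normal), and for each n let ξ̂_n = q_n(ξ_n) where q_n is a stationary scalar quantization of the standard normal (i.e. E(ξ_n | ξ̂_n) = ξ̂_n), with q_n the constant 0 for n > m. Then the product quantizer Ŵ = Σ_{n=1}^m √λ_n ξ̂_n e_n is stationary: E(W | Ŵ) = Ŵ almost surely. -/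
/-!
Let `𝒢 = σ(ξ̂ₙ, n ∈ ℕ)`; since `ξ̂ₙ = 0` for `n ≥ m`, `Ŵ` is `𝒢`-measurable, so by the tower
property it suffices to show `E(W | 𝒢) = Ŵ`. Both sides lie in the closed span of the `eₙ`, so
it is enough to compare coordinates: `⟪e_k, E(W | 𝒢)⟫ = E(√λ_k ξ_k | 𝒢)`. As `ξ_k` is
independent of the `ξ̂ₙ`, `n ≠ k`, these can be dropped from the conditioning (a π-λ argument
on the sets `{ξ̂_k ∈ A} ∩ B`), which leaves `√λ_k E(ξ_k | ξ̂_k) = √λ_k ξ̂_k`.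
-/

open MeasureTheory ProbabilityTheory

namespace MeasurableSpace

variable {α : Type*}

theorem isPiSystem_image2_inter_measurableSet (m₁ m₂ : MeasurableSpace α) :
    IsPiSystem (Set.image2 (· ∩ ·) {s | MeasurableSet[m₁] s} {s | MeasurableSet[m₂] s}) := by
  rintro _ ⟨a, ha, b, hb, rfl⟩ _ ⟨a', ha', b', hb', rfl⟩ -
  exact ⟨a ∩ a', ha.inter ha', b ∩ b', hb.inter hb', Set.inter_inter_inter_comm a a' b b'⟩

theorem generateFrom_image2_inter_measurableSet (m₁ m₂ : MeasurableSpace α) :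
    generateFrom (Set.image2 (· ∩ ·) {s | MeasurableSet[m₁] s} {s | MeasurableSet[m₂] s})
      = m₁ ⊔ m₂ := by
  refine le_antisymm (generateFrom_le ?_) (sup_le (fun a ha => ?_) fun b hb => ?_)
  · rintro _ ⟨a, ha, b, hb, rfl⟩
    exact (le_sup_left (a := m₁) (b := m₂) a ha).inter (le_sup_right (a := m₁) (b := m₂) b hb)
  · exact measurableSet_generateFrom ⟨a, ha, Set.univ, MeasurableSet.univ, Set.inter_univ a⟩
  · exact measurableSet_generateFrom ⟨Set.univ, MeasurableSet.univ, b, hb, Set.univ_inter b⟩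

end MeasurableSpace

section CondExp

variable {Ω E : Type*} [NormedAddCommGroup E] [NormedSpace ℝ E]
  {m m₁ m₂ m' mΩ : MeasurableSpace Ω} {μ : Measure Ω}

theorem setIntegral_eq_setIntegral_of_isPiSystem (hm : m ≤ mΩ) {C : Set (Set Ω)}
    (h_eq : m = MeasurableSpace.generateFrom C) (h_inter : IsPiSystem C) {f g : Ω → E}
    (hf : Integrable f μ) (hg : Integrable g μ)
    (basic : ∀ t ∈ C, ∫ x in t, f x ∂μ = ∫ x in t, g x ∂μ)
    (h_univ : ∫ x, f x ∂μ = ∫ x, g x ∂μ) {s : Set Ω} (hs : MeasurableSet[m] s) :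
    ∫ x in s, f x ∂μ = ∫ x in s, g x ∂μ := by
  induction s, hs using MeasurableSpace.induction_on_inter h_eq h_inter with
  | empty => simp
  | basic t ht => exact basic t ht
  | compl t ht iht =>
    rw [setIntegral_compl (hm _ ht) hf, setIntegral_compl (hm _ ht) hg, h_univ, iht]
  | iUnion t htd ht iht =>
    rw [integral_iUnion (fun i => hm _ (ht i)) htd hf.integrableOn,
      integral_iUnion (fun i => hm _ (ht i)) htd hg.integrableOn]
    simp_rw [iht]

variable [CompleteSpace E] [IsFiniteMeasure μ] {f : Ω → E}

theorem setIntegral_eq_measureReal_smul_integral_of_indep (hm' : m' ≤ mΩ) (hm₂ : m₂ ≤ mΩ)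
    (hf : StronglyMeasurable[m'] f) (hfi : Integrable f μ) (hindep : Indep m' m₂ μ)
    {s : Set Ω} (hs : MeasurableSet[m₂] s) :
    ∫ x in s, f x ∂μ = μ.real s • ∫ x, f x ∂μ := by
  rw [← setIntegral_condExp hm₂ hfi hs, setIntegral_congr_ae (hm₂ _ hs)
    ((condExp_indep_eq hm' hm₂ hf hindep).mono fun x hx _ => hx), setIntegral_const]

theorem condExp_sup_ae_eq_of_indep (hm₁ : m₁ ≤ m') (hm' : m' ≤ mΩ) (hm₂ : m₂ ≤ mΩ)
    (hf : StronglyMeasurable[m'] f) (hindep : Indep m' m₂ μ) :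
    μ[f | m₁ ⊔ m₂] =ᵐ[μ] μ[f | m₁] := by
  by_cases hfi : Integrable f μ
  swap
  · simp [condExp_of_not_integrable hfi]
  have hm₁Ω : m₁ ≤ mΩ := hm₁.trans hm'
  have hm₁₂ : m₁ ⊔ m₂ ≤ mΩ := sup_le hm₁Ω hm₂
  refine (ae_eq_condExp_of_forall_setIntegral_eq hm₁₂ hfi
    (fun _ _ _ => integrable_condExp.integrableOn) (fun s hs _ => ?_)
    (stronglyMeasurable_condExp.mono (le_sup_left (b := m₂))).aestronglyMeasurable).symm
  refine setIntegral_eq_setIntegral_of_isPiSystem hm₁₂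
    (MeasurableSpace.generateFrom_image2_inter_measurableSet m₁ m₂).symm
    (MeasurableSpace.isPiSystem_image2_inter_measurableSet m₁ m₂) integrable_condExp hfi
    ?_ (integral_condExp hm₁Ω) hs
  rintro _ ⟨a, ha, b, hb, rfl⟩
  have hsplit : ∀ g : Ω → E, StronglyMeasurable[m'] g → Integrable g μ →
      ∫ x in a ∩ b, g x ∂μ = μ.real b • ∫ x in a, g x ∂μ := fun g hg hgi => by
    rw [Set.inter_comm, ← setIntegral_indicator (hm₁Ω _ ha),
      setIntegral_eq_measureReal_smul_integral_of_indep hm' hm₂ (hg.indicator (hm₁ _ ha))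
        (hgi.indicator (hm₁Ω _ ha)) hindep hb, integral_indicator (hm₁Ω _ ha)]
  rw [hsplit _ (stronglyMeasurable_condExp.mono hm₁) integrable_condExp, hsplit f hf hfi,
    setIntegral_condExp hm₁Ω hfi ha]

theorem condExp_comap_ae_eq_of_condExp_ae_eq [MeasurableSpace E] [BorelSpace E] (hm : m ≤ mΩ)
    {g : Ω → E} (hg : StronglyMeasurable[m] g) (h : μ[f | m] =ᵐ[μ] g) :
    μ[f | MeasurableSpace.comap g inferInstance] =ᵐ[μ] g := by
  have hgm : MeasurableSpace.comap g inferInstance ≤ m := hg.measurable.comap_le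
  calc μ[f | MeasurableSpace.comap g inferInstance]
      =ᵐ[μ] μ[μ[f | m] | MeasurableSpace.comap g inferInstance] :=
        (condExp_condExp_of_le hgm hm).symm
    _ =ᵐ[μ] μ[g | MeasurableSpace.comap g inferInstance] := condExp_congr_ae h
    _ = g := condExp_of_stronglyMeasurable (hgm.trans hm)
        (stronglyMeasurable_iff_measurable_separable.2
          ⟨comap_measurable g, hg.isSeparable_range⟩)
        (integrable_condExp.congr h)

end CondExp

namespace ProbabilityTheory

variable {Ω ι β γ E : Type*} {mΩ : MeasurableSpace Ω} [MeasurableSpace β] [MeasurableSpace γ]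
  [NormedAddCommGroup E] [NormedSpace ℝ E] [CompleteSpace E]
  {μ : Measure Ω} [IsFiniteMeasure μ] {ξ : ι → Ω → β} {q : ι → β → γ}

theorem iIndepFun.condExp_iSup_comap_comp (hindep : iIndepFun ξ μ)
    (hξ : ∀ n, Measurable (ξ n)) (hq : ∀ n, Measurable (q n)) {k : ι} {f : Ω → E}
    (hf : StronglyMeasurable[MeasurableSpace.comap (ξ k) inferInstance] f) :
    μ[f | ⨆ n, MeasurableSpace.comap (fun ω => q n (ξ n ω)) inferInstance]
      =ᵐ[μ] μ[f | MeasurableSpace.comap (fun ω => q k (ξ k ω)) inferInstance] := by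
  have hcomap : ∀ n, MeasurableSpace.comap (fun ω => q n (ξ n ω)) inferInstance
      ≤ MeasurableSpace.comap (ξ n) inferInstance :=
    fun n => ((hq n).comp (comap_measurable (ξ n))).comap_le
  have hindep_k : Indep (MeasurableSpace.comap (ξ k) inferInstance)
      (⨆ (n) (_ : n ≠ k), MeasurableSpace.comap (fun ω => q n (ξ n ω)) inferInstance) μ := by
    have h := indep_iSup_of_disjoint (fun n => (hξ n).comap_le) hindep.iIndep
      (T := {n | n ≠ k}) (Set.disjoint_singleton_left.2 fun h => h rfl)
    rw [iSup_singleton] at h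
    exact indep_of_indep_of_le_right h (iSup₂_mono fun n _ => hcomap n)
  rw [iSup_split_single _ k]
  exact condExp_sup_ae_eq_of_indep (hcomap k) (hξ k).comap_le
    (iSup₂_le fun n _ => ((hq n).comp (hξ n)).comap_le) hf hindep_k

end ProbabilityTheory

section

variable {𝕜 E ι : Type*} [NormedField 𝕜] [NormedAddCommGroup E] [NormedSpace 𝕜 E] {e : ι → E}

theorem mem_topologicalClosure_span_of_hasSum {c : ι → 𝕜} {x : E}
    (hx : HasSum (fun i => c i • e i) x) :
    x ∈ (Submodule.span 𝕜 (Set.range e)).topologicalClosure :=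
  hx.tsum_eq ▸ tsum_mem (Submodule.isClosed_topologicalClosure _) fun i =>
    Submodule.le_topologicalClosure _ (Submodule.smul_mem _ _ (Submodule.subset_span ⟨i, rfl⟩))

end

section

open scoped InnerProductSpace

variable {𝕜 H ι : Type*} [RCLike 𝕜] [NormedAddCommGroup H] [InnerProductSpace 𝕜 H] {e : ι → H}

theorem Orthonormal.inner_right_of_hasSum (he : Orthonormal 𝕜 e) {c : ι → 𝕜} {x : H}
    (hx : HasSum (fun i => c i • e i) x) (k : ι) : ⟪e k, x⟫_𝕜 = c k := by
  classical
  refine (hx.mapL (innerSL 𝕜 (e k))).unique ?_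
  convert hasSum_ite_eq k (c k) using 2 with i
  rw [innerSL_apply_apply, inner_smul_right, orthonormal_iff_ite.1 he k i]
  split_ifs <;> simp_all [eq_comm]

theorem eq_zero_of_mem_topologicalClosure_span_of_inner_eq_zero {x : H}
    (hx : x ∈ (Submodule.span 𝕜 (Set.range e)).topologicalClosure) (h : ∀ i, ⟪e i, x⟫_𝕜 = 0) :
    x = 0 := by
  have hspan : Submodule.span 𝕜 (Set.range e) ≤ (𝕜 ∙ x)ᗮ := Submodule.span_le.2 <| by
    rintro _ ⟨i, rfl⟩
    exact Submodule.mem_orthogonal_singleton_iff_inner_left.2 (h i)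
  have hx' : x ∈ (Submodule.span 𝕜 (Set.range e)).topologicalClosureᗮ := by
    rw [Submodule.orthogonal_closure]
    exact fun u hu => Submodule.mem_orthogonal_singleton_iff_inner_left.1 (hspan hu)
  exact inner_self_eq_zero.1 (Submodule.inner_right_of_mem_orthogonal hx hx')

theorem ae_eq_of_forall_inner_ae_eq [Countable ι] {Ω : Type*} {mΩ : MeasurableSpace Ω}
    {μ : Measure Ω} {f g : Ω → H}
    (hf : ∀ᵐ ω ∂μ, f ω ∈ (Submodule.span 𝕜 (Set.range e)).topologicalClosure)
    (hg : ∀ᵐ ω ∂μ, g ω ∈ (Submodule.span 𝕜 (Set.range e)).topologicalClosure)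
    (h : ∀ i, (fun ω => ⟪e i, f ω⟫_𝕜) =ᵐ[μ] fun ω => ⟪e i, g ω⟫_𝕜) : f =ᵐ[μ] g := by
  filter_upwards [hf, hg, ae_all_iff.2 h] with ω hfω hgω hω
  refine sub_eq_zero.1 (eq_zero_of_mem_topologicalClosure_span_of_inner_eq_zero
    (Submodule.sub_mem _ hfω hgω) fun i => ?_)
  rw [inner_sub_right, hω i, sub_self]

end

section

variable {H ι Ω : Type*} [NormedAddCommGroup H] [InnerProductSpace ℝ H] [CompleteSpace H]
  [Countable ι] {e : ι → H} {m mΩ : MeasurableSpace Ω} {μ : Measure Ω} [IsFiniteMeasure μ]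

theorem Orthonormal.condExp_ae_eq_of_hasSum (he : Orthonormal ℝ e) (hm : m ≤ mΩ)
    {F F' : Ω → H} {c c' : ι → Ω → ℝ} (hF : ∀ ω, HasSum (fun i => c i ω • e i) (F ω))
    (hF' : ∀ ω, HasSum (fun i => c' i ω • e i) (F' ω)) (hFi : Integrable F μ)
    (hc : ∀ i, μ[c i | m] =ᵐ[μ] c' i) :
    μ[F | m] =ᵐ[μ] F' := by
  refine ae_eq_of_forall_inner_ae_eq (𝕜 := ℝ) (e := e)
    (Convex.condExp_mem hm hFi (Submodule.isClosed_topologicalClosure _) (Submodule.convex _)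
      (ae_of_all _ fun ω => mem_topologicalClosure_span_of_hasSum (hF ω)))
    (ae_of_all _ fun ω => mem_topologicalClosure_span_of_hasSum (hF' ω)) fun i => ?_
  have hcoef : innerSL ℝ (e i) ∘ F = c i := funext fun ω => he.inner_right_of_hasSum (hF ω) i
  filter_upwards [(innerSL ℝ (e i)).comp_condExp_comm hFi (m := m), hc i] with ω hinner hci
  simp only [Function.comp_apply, innerSL_apply_apply] at hinner
  rw [hinner, hcoef, hci, he.inner_right_of_hasSum (hF' ω) i]

end

theorem product_quantizer_stationary_general
    {H Ω : Type*} [NormedAddCommGroup H] [InnerProductSpace ℝ H]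
    [CompleteSpace H]
    [MeasurableSpace H] [BorelSpace H]
    {mΩ : MeasurableSpace Ω} (μ : Measure Ω) [IsProbabilityMeasure μ]
    (e : ℕ → H) (hon : Orthonormal ℝ e)
    (lam : ℕ → ℝ)
    (ξ : ℕ → Ω → ℝ) (hξm : ∀ n, Measurable (ξ n))
    (hindep : iIndepFun ξ μ)
    (W : Ω → H) (hWint : Integrable W μ)
    -- K–L expansion of `W`
    (hW : ∀ ω, HasSum (fun n => (Real.sqrt (lam n) * ξ n ω) • e n) (W ω))
    (m : ℕ) (q : ℕ → ℝ → ℝ) (hqm : ∀ n, Measurable (q n))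
    (hqzero : ∀ n, m ≤ n → q n = fun _ => 0)
    -- each scalar quantization is stationary: `E(ξ_n | ξ̂_n) = ξ̂_n`
    (hstat : ∀ n,
      μ[ξ n | MeasurableSpace.comap (fun ω => q n (ξ n ω)) inferInstance]
        =ᵐ[μ] fun ω => q n (ξ n ω))
    (What : Ω → H)
    (hWhat : ∀ ω, What ω =
      ∑ n ∈ Finset.range m, (Real.sqrt (lam n) * q n (ξ n ω)) • e n) :
    μ[W | MeasurableSpace.comap What inferInstance] =ᵐ[μ] What := by
  set G : MeasurableSpace Ω := ⨆ n, MeasurableSpace.comap (fun ω => q n (ξ n ω)) inferInstance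
  have hG : G ≤ mΩ := iSup_le fun n => ((hqm n).comp (hξm n)).comap_le
  have hWhat_sum (ω : Ω) :
      HasSum (fun n => (Real.sqrt (lam n) * q n (ξ n ω)) • e n) (What ω) :=
    hWhat ω ▸ hasSum_sum_of_ne_finset_zero fun n hn => by
      simp [hqzero n (by simpa using hn)]
  have hWhat_meas : StronglyMeasurable[G] What := by
    rw [funext hWhat]
    have hXG (n : ℕ) : MeasurableSpace.comap (fun ω => q n (ξ n ω)) inferInstance ≤ G :=
      le_iSup (fun n => MeasurableSpace.comap (fun ω => q n (ξ n ω)) inferInstance) n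
    exact Finset.stronglyMeasurable_fun_sum _ fun n _ =>
      (((comap_measurable _).stronglyMeasurable.mono (hXG n)).const_mul _).smul_const _
  have hcoord (k : ℕ) : μ[fun ω => Real.sqrt (lam k) * ξ k ω | G]
      =ᵐ[μ] fun ω => Real.sqrt (lam k) * q k (ξ k ω) :=
    calc μ[fun ω => Real.sqrt (lam k) * ξ k ω | G]
        =ᵐ[μ] μ[Real.sqrt (lam k) • ξ k |
            MeasurableSpace.comap (fun ω => q k (ξ k ω)) inferInstance] :=
          hindep.condExp_iSup_comap_comp hξm hqm
            ((comap_measurable (ξ k)).stronglyMeasurable.const_mul _)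
      _ =ᵐ[μ] Real.sqrt (lam k) •
            μ[ξ k | MeasurableSpace.comap (fun ω => q k (ξ k ω)) inferInstance] :=
          condExp_smul _ _ _
      _ =ᵐ[μ] fun ω => Real.sqrt (lam k) * q k (ξ k ω) :=
          (hstat k).const_smul _
  exact condExp_comap_ae_eq_of_condExp_ae_eq hG hWhat_meas
    (hon.condExp_ae_eq_of_hasSum hG (c := fun n ω => Real.sqrt (lam n) * ξ n ω) hW hWhat_sum
      hWint hcoord)

/-- a product quantizer of Brownian motion built on its K–L
expansion `W = Σ √λ_n ξ_n e_n` from stationary scalar quantizations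
`ξ̂_n = q_n(ξ_n)` (with `q_n = 0` for `n ≥ m`) is stationary:
`E(W | Ŵ) = Ŵ` a.s. -/
theorem product_quantizer_stationary
    {H Ω : Type*} [NormedAddCommGroup H] [InnerProductSpace ℝ H]
    [TopologicalSpace.SeparableSpace H] [CompleteSpace H]
    [MeasurableSpace H] [BorelSpace H]
    {mΩ : MeasurableSpace Ω} (μ : Measure Ω) [IsProbabilityMeasure μ]
    (e : ℕ → H) (hon : Orthonormal ℝ e)
    (lam : ℕ → ℝ) (hlam : ∀ n, 0 < lam n)
    (ξ : ℕ → Ω → ℝ) (hξm : ∀ n, Measurable (ξ n))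
    (hindep : iIndepFun ξ μ)
    (hgauss : ∀ n, μ.map (ξ n) = gaussianReal 0 1)
    (W : Ω → H) (hWm : Measurable W) (hWint : Integrable W μ)
    -- K–L expansion of `W`
    (hW : ∀ ω, HasSum (fun n => (Real.sqrt (lam n) * ξ n ω) • e n) (W ω))
    (m : ℕ) (q : ℕ → ℝ → ℝ) (hqm : ∀ n, Measurable (q n))
    (hqfin : ∀ n, (Set.range (q n)).Finite)
    (hqzero : ∀ n, m ≤ n → q n = fun _ => 0)
    -- each scalar quantization is stationary: `E(ξ_n | ξ̂_n) = ξ̂_n`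
    (hstat : ∀ n,
      μ[ξ n | MeasurableSpace.comap (fun ω => q n (ξ n ω)) inferInstance]
        =ᵐ[μ] fun ω => q n (ξ n ω))
    (What : Ω → H)
    (hWhat : ∀ ω, What ω =
      ∑ n ∈ Finset.range m, (Real.sqrt (lam n) * q n (ξ n ω)) • e n) :
    μ[W | MeasurableSpace.comap What inferInstance] =ᵐ[μ] What :=
  product_quantizer_stationary_general (mΩ := mΩ) μ e hon lam ξ hξm hindep W hWint hW m q hqm hqzero
    hstat What hWhat
end

section
/- Let (x₁,…,x_N) ∈ ([0,1]^d)^N and let U be uniformly distributed on [0,1]^d. Assume the Proinov inequality: for every continuous f : [0,1]^d → ℝ, |∫_{[0,1]^d} f dλ_d − (1/N) Σ_k f(x_k)| ≤ K_d ω_f(D^{1/d}) where D = Disc*_N(x₁,…,x_N) is the star discrepancy and ω_f is the ℓ∞ modulus of continuity. Then the L¹ quantization error of U with respect to the ℓ∞-norm by the grid {x₁,…,x_N} satisfies E[min_{1≤k≤N} |U − x_k|_∞] ≤ K_d · Disc*_N(x₁,…,x_N)^{1/d}. -/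
/-!
The distance to the grid, `f ξ = min_k ‖ξ - x_k‖_∞`, is `1`-Lipschitz and vanishes at every
grid point, so its empirical mean is `0` and its modulus of continuity at scale `δ` is at
most `δ`.
Proinov's inequality applied to `f` then bounds `∫ f` by `K · D^{1/d}`.
-/

open MeasureTheory Metric

theorem Metric.infDist_range {α ι : Type*} [PseudoMetricSpace α] (x : ι → α) (ξ : α) :
    infDist ξ (Set.range x) = ⨅ k, dist ξ (x k) := by
  rw [infDist_eq_iInf, iInf_range']

section GridDistance

variable {E ι : Type*} [SeminormedAddCommGroup E] (x : ι → E)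

theorem lipschitzWith_one_iInf_norm_sub : LipschitzWith 1 fun ξ => ⨅ k, ‖ξ - x k‖ := by
  simpa only [infDist_range, dist_eq_norm] using lipschitz_infDist_pt (Set.range x)

theorem iInf_norm_sub_apply_eq_zero (k : ι) : ⨅ j, ‖x k - x j‖ = 0 := by
  simpa only [infDist_range, dist_eq_norm] using
    infDist_zero_of_mem (Set.mem_range_self (f := x) k)

end GridDistance

theorem LipschitzWith.sSup_abs_sub_le {E : Type*} [SeminormedAddCommGroup E] {K : NNReal}
    {f : E → ℝ} (hf : LipschitzWith K f) (P : E → Prop) {δ : ℝ} (hδ : 0 ≤ δ) :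
    sSup {r : ℝ | ∃ u, P u ∧ ∃ v, P v ∧ ‖u - v‖ ≤ δ ∧ r = |f u - f v|} ≤ K * δ := by
  refine Real.sSup_le ?_ (by positivity)
  rintro r ⟨u, -, v, -, huv, rfl⟩
  calc |f u - f v| ≤ K * ‖u - v‖ := by
        simpa only [dist_eq_norm, Real.norm_eq_abs] using hf.dist_le_mul u v
    _ ≤ K * δ := by gcongr

theorem quantization_error_le_discrepancy_general
    (d N : ℕ) (K : ℝ) (hK : 0 ≤ K)
    (x : Fin N → (Fin d → ℝ))
    (D : ℝ)
    -- `D` is the star discrepancy of `(x₁,…,x_N)`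
    (hD : D = sSup {r : ℝ | ∃ y : Fin d → ℝ, (∀ i, y i ∈ Set.Icc (0 : ℝ) 1) ∧
      r = |(((Finset.univ.filter (fun k : Fin N => ∀ i, x k i ≤ y i)).card : ℝ) / N)
            - ∏ i, y i|})
    -- Proinov's inequality for this grid, with `ω_f` the `ℓ∞` modulus of continuity
    (hProinov : ∀ f : (Fin d → ℝ) → ℝ,
      ContinuousOn f {ξ | ∀ i, ξ i ∈ Set.Icc (0 : ℝ) 1} →
      |(∫ ξ in {ξ : Fin d → ℝ | ∀ i, ξ i ∈ Set.Icc (0 : ℝ) 1}, f ξ)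
          - (∑ k : Fin N, f (x k)) / N|
        ≤ K * sSup {r : ℝ | ∃ u, (∀ i, u i ∈ Set.Icc (0 : ℝ) 1) ∧
            ∃ v, (∀ i, v i ∈ Set.Icc (0 : ℝ) 1) ∧
              ‖u - v‖ ≤ D ^ ((1 : ℝ) / d) ∧ r = |f u - f v|}) :
    (∫ ξ in {ξ : Fin d → ℝ | ∀ i, ξ i ∈ Set.Icc (0 : ℝ) 1},
        ⨅ k : Fin N, ‖ξ - x k‖)
      ≤ K * D ^ ((1 : ℝ) / d) := by
  have hlip := lipschitzWith_one_iInf_norm_sub x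
  have hD₀ : 0 ≤ D := hD ▸ Real.sSup_nonneg fun r ⟨_, _, hr⟩ => hr ▸ abs_nonneg _
  have hP := hProinov _ hlip.continuous.continuousOn
  simp only [iInf_norm_sub_apply_eq_zero, Finset.sum_const_zero, zero_div, sub_zero] at hP
  refine (le_abs_self _).trans (hP.trans ?_)
  gcongr
  simpa only [NNReal.coe_one, one_mul] using hlip.sSup_abs_sub_le _ (Real.rpow_nonneg hD₀ _)

/-- from Proinov's inequality, the `L¹` quantization error of the
uniform distribution on `[0,1]^d` (for the `ℓ∞`-norm, which is the sup-norm on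
`Fin d → ℝ`) by the grid `{x₁,…,x_N}` is bounded by `K_d · (Disc*_N)^{1/d}`. -/
theorem quantization_error_le_discrepancy
    (d N : ℕ) (hd : 0 < d) (hN : 0 < N) (K : ℝ) (hK : 0 ≤ K)
    (x : Fin N → (Fin d → ℝ))
    (hx : ∀ k, ∀ i, x k i ∈ Set.Icc (0 : ℝ) 1)
    (D : ℝ)
    -- `D` is the star discrepancy of `(x₁,…,x_N)`
    (hD : D = sSup {r : ℝ | ∃ y : Fin d → ℝ, (∀ i, y i ∈ Set.Icc (0 : ℝ) 1) ∧
      r = |(((Finset.univ.filter (fun k : Fin N => ∀ i, x k i ≤ y i)).card : ℝ) / N)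
            - ∏ i, y i|})
    -- Proinov's inequality for this grid, with `ω_f` the `ℓ∞` modulus of continuity
    (hProinov : ∀ f : (Fin d → ℝ) → ℝ,
      ContinuousOn f {ξ | ∀ i, ξ i ∈ Set.Icc (0 : ℝ) 1} →
      |(∫ ξ in {ξ : Fin d → ℝ | ∀ i, ξ i ∈ Set.Icc (0 : ℝ) 1}, f ξ)
          - (∑ k : Fin N, f (x k)) / N|
        ≤ K * sSup {r : ℝ | ∃ u, (∀ i, u i ∈ Set.Icc (0 : ℝ) 1) ∧
            ∃ v, (∀ i, v i ∈ Set.Icc (0 : ℝ) 1) ∧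
              ‖u - v‖ ≤ D ^ ((1 : ℝ) / d) ∧ r = |f u - f v|}) :
    (∫ ξ in {ξ : Fin d → ℝ | ∀ i, ξ i ∈ Set.Icc (0 : ℝ) 1},
        ⨅ k : Fin N, ‖ξ - x k‖)
      ≤ K * D ^ ((1 : ℝ) / d) :=
  quantization_error_le_discrepancy_general d N K hK x D hD hProinov
end
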